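/- arXiv:2102.09035 — 6 statements merged into one kernel-verified Lean document; each statement's English description precedes it below -/
import Mathlib

section
/- Let 1 ≤ N ≤ n−1. Let Φ : ℝ^N × ℝⁿ → ℝⁿ and Ψ : ℝⁿ → ℝ be C² near (0,0) and 0 respectively, with Φ(0,0)=0 and Ψ(0)=0. Write y = (y°, ỹ) ∈ ℝ^{n−N} × ℝ^N, let e₁ be the first standard basis vector of ℝⁿ, and assume at (t,y)=(0,0): ∂_t(Ψ∘Φ) = 0 and the full y-gradient d_y(Ψ∘Φ) equals e₁ᵀ. Let ξ₀ := dΨ(0) and set, with all derivatives at (0,0): M₁₁ := Φ_{(t,y°)} (the n×n Jacobian of Φ in the variables (t,y°)), M₁₂ := Φ_{ỹ}, M₂₁ := the ((ξ₀·Φ)_{tt}, (ξ₀·Φ)_{t y°}) block (size N×n), M₂₂ := (ξ₀·Φ)_{t ỹ} (size N×N), and H := (Ψ∘Φ)_{tt} (size N×N). Assume M₁₁ and H are invertible and set C := M₂₂ − M₂₁ M₁₁⁻¹ M₁₂ and Q := Cᵀ H⁻¹ C. Suppose τ : ℝ^N → ℝ^N and Y : ℝ^N → ℝⁿ are C² near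 0 with τ(0)=0, Y(0)=0, the last N components of Y(ỹ) equal to ỹ, and Φ(τ(ỹ), Y(ỹ)) = 0 identically near 0. Suppose also σ : ℝ^N → ℝ^N and h : ℝ^N → ℝ are C² near 0 with σ(0)=0, h(0)=0, such that, setting Z(ỹ) := Y(ỹ) − h(ỹ)e₁, both (Ψ∘Φ)(σ(ỹ), Z(ỹ)) = 0 and ∂_t(Ψ∘Φ)(σ(ỹ), Z(ỹ)) = 0 hold identically near 0. Then the Hessian of h at ỹ = 0 equals −Q, i.e. h(ỹ) = −(1/2) Qỹ·ỹ + o(|ỹ|²). -/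
open scoped Topology
open Asymptotics

section Aux
variable {E F G : Type*} [NormedAddCommGroup E] [NormedSpace ℝ E]
  [NormedAddCommGroup F] [NormedSpace ℝ F] [NormedAddCommGroup G] [NormedSpace ℝ G]
open scoped ContDiff in
lemma two_ne_top : (2 : WithTop ℕ∞) ≠ ∞ := by decide
lemma ev_diff {f : E → F} {x : E} (hf : ContDiffAt ℝ 2 f x) :
    ∀ᶠ y in 𝓝 x, DifferentiableAt ℝ f y := by
  filter_upwards [hf.eventually two_ne_top] with y hy
  exact hy.differentiableAt two_ne_zero
lemma diff_fderiv {f : E → F} {x : E} (hf : ContDiffAt ℝ 2 f x) :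
    DifferentiableAt ℝ (fderiv ℝ f) x := by
  have := hf.fderiv_right (m := 1) (by norm_num)
  exact this.differentiableAt one_ne_zero
lemma fderiv_eval {f : E → F} {x : E} (hf : ContDiffAt ℝ 2 f x) (u : E) :
    fderiv ℝ (fun y => fderiv ℝ f y u) x = (fderiv ℝ (fderiv ℝ f) x).flip u := by
  have h1 : (fun y => fderiv ℝ f y u)
      = (ContinuousLinearMap.apply ℝ F u) ∘ (fderiv ℝ f) := rfl
  rw [h1, fderiv_comp x ((ContinuousLinearMap.apply ℝ F u).differentiableAt) (diff_fderiv hf),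
    (ContinuousLinearMap.apply ℝ F u).fderiv]
  ext v
  simp
lemma first_order_vanish {f : F → G} {g : E → F} {x : E} {c : G}
    (hf : DifferentiableAt ℝ f (g x)) (hg : DifferentiableAt ℝ g x)
    (hc : ∀ᶠ y in 𝓝 x, f (g y) = c) (v : E) :
    fderiv ℝ f (g x) (fderiv ℝ g x v) = 0 := by
  have h0 : fderiv ℝ (f ∘ g) x = 0 := by
    have : (f ∘ g) =ᶠ[𝓝 x] fun _ => c := hc
    rw [this.fderiv_eq, fderiv_fun_const]; rfl
  have := fderiv_comp x hf hg
  rw [h0] at this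
  have := congrFun (congrArg (fun L : E →L[ℝ] G => (L : E → G)) this.symm) v
  simpa using this
lemma second_order_vanish {f : F → G} {g : E → F} {x : E} {c : G}
    (hf : ContDiffAt ℝ 2 f (g x)) (hg : ContDiffAt ℝ 2 g x)
    (hc : ∀ᶠ y in 𝓝 x, f (g y) = c) (v u : E) :
    fderiv ℝ (fderiv ℝ f) (g x) (fderiv ℝ g x v) (fderiv ℝ g x u)
      + fderiv ℝ f (g x) (fderiv ℝ (fderiv ℝ g) x v u) = 0 := by
  have hgc : ContinuousAt g x := hg.continuousAt
  have hev : ∀ᶠ y in 𝓝 x,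
      (fun z => (fderiv ℝ f (g z)).comp (fderiv ℝ g z)) y = (0 : E →L[ℝ] G) := by
    filter_upwards [hgc.eventually (ev_diff hf), ev_diff hg, hc.eventually_nhds] with y h1 h2 h3
    have hcomp : fderiv ℝ (f ∘ g) y = (fderiv ℝ f (g y)).comp (fderiv ℝ g y) :=
      fderiv_comp y h1 h2
    have h0 : fderiv ℝ (f ∘ g) y = 0 := by
      have : (f ∘ g) =ᶠ[𝓝 y] fun _ => c := h3
      rw [this.fderiv_eq, fderiv_fun_const]; rfl
    rw [← hcomp, h0]
  have h1 : HasFDerivAt (fun z => fderiv ℝ f (g z))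
      ((fderiv ℝ (fderiv ℝ f) (g x)).comp (fderiv ℝ g x)) x := by
    have := (diff_fderiv hf).hasFDerivAt.comp x (hg.differentiableAt two_ne_zero).hasFDerivAt
    exact this
  have h2 : HasFDerivAt (fderiv ℝ g) (fderiv ℝ (fderiv ℝ g) x) x :=
    (diff_fderiv hg).hasFDerivAt
  have h3 := h1.clm_comp h2
  have h4 : fderiv ℝ (fun z => (fderiv ℝ f (g z)).comp (fderiv ℝ g z)) x = 0 := by
    have : (fun z => (fderiv ℝ f (g z)).comp (fderiv ℝ g z))
        =ᶠ[𝓝 x] (fun _ => (0 : E →L[ℝ] G)) := hev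
    rw [this.fderiv_eq, fderiv_fun_const]; rfl
  have h5 := h3.fderiv
  rw [h4] at h5
  have h6 : (((ContinuousLinearMap.compL ℝ E F G) (fderiv ℝ f (g x))).comp
        (fderiv ℝ (fderiv ℝ g) x) +
      ((ContinuousLinearMap.compL ℝ E F G).flip (fderiv ℝ g x)).comp
        ((fderiv ℝ (fderiv ℝ f) (g x)).comp (fderiv ℝ g x))) v u = 0 := by
    rw [← h5]; rfl
  simp only [ContinuousLinearMap.add_apply, ContinuousLinearMap.comp_apply,
    ContinuousLinearMap.compL_apply, ContinuousLinearMap.flip_apply] at h6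
  rw [add_comm] at h6; exact h6
lemma clm_second_deriv (L : F →L[ℝ] G) {g : E → F} {x : E}
    (hg : ContDiffAt ℝ 2 g x) (v u : E) :
    fderiv ℝ (fderiv ℝ (fun y => L (g y))) x v u
      = L (fderiv ℝ (fderiv ℝ g) x v u) := by
  have hev : (fderiv ℝ (fun y => L (g y)))
      =ᶠ[𝓝 x] fun y => L.comp (fderiv ℝ g y) := by
    filter_upwards [ev_diff hg] with y hy
    exact fderiv_comp y L.differentiableAt hy |>.trans (by rw [L.fderiv])
  rw [hev.fderiv_eq]
  have h1 : HasFDerivAt (fun y => L.comp (fderiv ℝ g y))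
      ((ContinuousLinearMap.compL ℝ E F G L).comp (fderiv ℝ (fderiv ℝ g) x)) x := by
    exact (ContinuousLinearMap.compL ℝ E F G L).hasFDerivAt.comp x
      (diff_fderiv hg).hasFDerivAt
  rw [h1.fderiv]
  simp
lemma second_deriv_sub {g₁ g₂ : E → ℝ} {x : E}
    (h1 : ContDiffAt ℝ 2 g₁ x) (h2 : ContDiffAt ℝ 2 g₂ x) (v u : E) :
    fderiv ℝ (fderiv ℝ (fun y => g₁ y - g₂ y)) x v u
      = fderiv ℝ (fderiv ℝ g₁) x v u - fderiv ℝ (fderiv ℝ g₂) x v u := by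
  have hev : (fderiv ℝ (fun y => g₁ y - g₂ y))
      =ᶠ[𝓝 x] fun y => fderiv ℝ g₁ y - fderiv ℝ g₂ y := by
    filter_upwards [ev_diff h1, ev_diff h2] with y hy1 hy2
    exact fderiv_sub hy1 hy2
  rw [hev.fderiv_eq, fderiv_fun_sub (diff_fderiv h1) (diff_fderiv h2)]
  simp
lemma taylor2 {g : E → ℝ} (hg : ContDiffAt ℝ 2 g 0) (h0 : g 0 = 0)
    (h1 : fderiv ℝ g 0 = 0) :
    (fun y => g y - (1 / 2 : ℝ) * fderiv ℝ (fderiv ℝ g) 0 y y)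
      =o[𝓝 (0 : E)] fun y => ‖y‖ ^ 2 := by
  set B := fderiv ℝ (fderiv ℝ g) 0 with hB
  have hsym : ∀ u v, B u v = B v u := hg.isSymmSndFDerivAt (by simp)
  have hBd : HasFDerivAt (fderiv ℝ g) B 0 := (diff_fderiv hg).hasFDerivAt
  have hq : ∀ z : E, HasFDerivAt (fun y => (1 / 2 : ℝ) * B y y) (B z) z := by
    intro z
    have hbb := (B.isBoundedBilinearMap).hasFDerivAt (z, z)
    have hdiag : HasFDerivAt (fun y : E => ((y, y) : E × E))
        ((ContinuousLinearMap.id ℝ E).prod (ContinuousLinearMap.id ℝ E)) z :=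
      ((hasFDerivAt_id z).prodMk (hasFDerivAt_id z))
    have hc : HasFDerivAt (fun y : E => B y y)
        (((B.isBoundedBilinearMap).deriv (z, z)).comp
          ((ContinuousLinearMap.id ℝ E).prod (ContinuousLinearMap.id ℝ E))) z :=
      HasFDerivAt.comp (f := fun y : E => ((y, y) : E × E)) z hbb hdiag
    have hc' := hc.const_mul (1 / 2 : ℝ)
    refine hc'.congr_fderiv ?_
    · ext v
      have := hsym z v
      simp only [ContinuousLinearMap.smul_apply, ContinuousLinearMap.comp_apply,
        ContinuousLinearMap.prod_apply, ContinuousLinearMap.coe_id', id_eq,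
        IsBoundedBilinearMap.deriv_apply, smul_eq_mul]
      rw [← this]; ring
  rw [isLittleO_iff]
  intro c hc
  have hlip : ∀ᶠ z in 𝓝 (0 : E), ‖fderiv ℝ g z - B z‖ ≤ c * ‖z‖ := by
    have := hasFDerivAt_iff_isLittleO_nhds_zero.mp hBd
    rw [isLittleO_iff] at this
    have h3 : ∀ᶠ z in 𝓝 (0 : E), ‖fderiv ℝ g (0 + z) - fderiv ℝ g 0 - B z‖ ≤ c * ‖z‖ := this hc
    filter_upwards [h3] with z hz
    simpa [h1] using hz
  have hdiff := ev_diff hg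
  rcases Metric.eventually_nhds_iff_ball.mp (hdiff.and hlip) with ⟨δ, hδ, hball⟩
  rw [Metric.eventually_nhds_iff_ball]
  refine ⟨δ, hδ, fun y hy => ?_⟩
  set r := fun z => g z - (1 / 2 : ℝ) * B z z with hr
  have hmem : ∀ z ∈ Metric.closedBall (0 : E) ‖y‖, z ∈ Metric.ball (0 : E) δ := by
    intro z hz
    simp only [Metric.mem_closedBall, dist_zero_right] at hz
    simp only [Metric.mem_ball, dist_zero_right]
    exact lt_of_le_of_lt hz (by simpa [dist_zero_right] using hy)
  have hd : ∀ z ∈ Metric.closedBall (0 : E) ‖y‖,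
      HasFDerivWithinAt r (fderiv ℝ g z - B z) (Metric.closedBall (0 : E) ‖y‖) z := by
    intro z hz
    have hz' := hball z (hmem z hz)
    exact (((hz'.1.hasFDerivAt).sub (hq z)).hasFDerivWithinAt)
  have hbound : ∀ z ∈ Metric.closedBall (0 : E) ‖y‖, ‖fderiv ℝ g z - B z‖ ≤ c * ‖y‖ := by
    intro z hz
    have hz' := hball z (hmem z hz)
    refine (hz'.2).trans ?_
    have : ‖z‖ ≤ ‖y‖ := by simpa [dist_zero_right] using hz
    nlinarith [norm_nonneg z, norm_nonneg y, hc.le]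
  have hconv : Convex ℝ (Metric.closedBall (0 : E) ‖y‖) := convex_closedBall _ _
  have h0mem : (0 : E) ∈ Metric.closedBall (0 : E) ‖y‖ := by simp [Metric.mem_closedBall]
  have hymem : y ∈ Metric.closedBall (0 : E) ‖y‖ := by simp [Metric.mem_closedBall]
  have := hconv.norm_image_sub_le_of_norm_hasFDerivWithin_le hd hbound h0mem hymem
  have hr0 : r 0 = 0 := by simp [hr, h0]
  rw [hr0, sub_zero, sub_zero] at this
  calc ‖r y‖ ≤ c * ‖y‖ * ‖y‖ := this
    _ = c * ‖y‖ ^ 2 := by ring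
    _ ≤ c * ‖‖y‖ ^ 2‖ := by rw [Real.norm_of_nonneg (by positivity)]
end Aux

lemma pi_sum_single {ι : Type*} [Fintype ι] [DecidableEq ι] (s : ι → ℝ) :
    ∑ i, s i • (Pi.single i 1 : ι → ℝ) = s := by
  funext k
  rw [Finset.sum_apply]
  simp [Pi.single_apply]

lemma clm_expand {ι : Type*} [Fintype ι] [DecidableEq ι] {W : Type*} [NormedAddCommGroup W]
    [NormedSpace ℝ W] (L : (ι → ℝ) →L[ℝ] W) (s : ι → ℝ) :
    L s = ∑ i, s i • L (Pi.single i 1) := by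
  conv_lhs => rw [← pi_sum_single s]
  rw [map_sum]
  simp

lemma clm_expand3 {ι₁ ι₂ ι₃ : Type*} [Fintype ι₁] [DecidableEq ι₁] [Fintype ι₂] [DecidableEq ι₂]
    [Fintype ι₃] [DecidableEq ι₃] {W : Type*} [NormedAddCommGroup W] [NormedSpace ℝ W]
    (L : ((ι₁ → ℝ) × ((ι₂ → ℝ) × (ι₃ → ℝ))) →L[ℝ] W) (s : ι₁ → ℝ) (a : ι₂ → ℝ) (b : ι₃ → ℝ) :
    L (s, (a, b)) = (∑ i, s i • L (Pi.single i 1, (0, 0)))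
      + (∑ k, a k • L (0, (Pi.single k 1, 0))) + (∑ j, b j • L (0, (0, Pi.single j 1))) := by
  have hsplit : ((s, (a, b)) : (ι₁ → ℝ) × ((ι₂ → ℝ) × (ι₃ → ℝ)))
      = (s, (0, 0)) + ((0, (a, 0)) + (0, (0, b))) := by simp
  rw [hsplit, map_add, map_add]
  have h1 : L (s, (0, 0)) = ∑ i, s i • L (Pi.single i 1, (0, 0)) := by
    calc L (s, (0, 0)) = (L.comp (ContinuousLinearMap.inl ℝ (ι₁ → ℝ) ((ι₂ → ℝ) × (ι₃ → ℝ)))) s := rfl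
      _ = ∑ i, s i • (L.comp (ContinuousLinearMap.inl ℝ (ι₁ → ℝ) ((ι₂ → ℝ) × (ι₃ → ℝ))))
            (Pi.single i 1) := clm_expand _ s
      _ = ∑ i, s i • L (Pi.single i 1, (0, 0)) := rfl
  have h2 : L (0, (a, 0)) = ∑ k, a k • L (0, (Pi.single k 1, 0)) := by
    calc L (0, (a, 0)) = (L.comp ((ContinuousLinearMap.inr ℝ (ι₁ → ℝ) ((ι₂ → ℝ) × (ι₃ → ℝ))).comp
          (ContinuousLinearMap.inl ℝ (ι₂ → ℝ) (ι₃ → ℝ)))) a := rfl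
      _ = ∑ k, a k • (L.comp ((ContinuousLinearMap.inr ℝ (ι₁ → ℝ) ((ι₂ → ℝ) × (ι₃ → ℝ))).comp
            (ContinuousLinearMap.inl ℝ (ι₂ → ℝ) (ι₃ → ℝ)))) (Pi.single k 1) := clm_expand _ a
      _ = ∑ k, a k • L (0, (Pi.single k 1, 0)) := rfl
  have h3 : L (0, (0, b)) = ∑ j, b j • L (0, (0, Pi.single j 1)) := by
    calc L (0, (0, b)) = (L.comp ((ContinuousLinearMap.inr ℝ (ι₁ → ℝ) ((ι₂ → ℝ) × (ι₃ → ℝ))).comp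
          (ContinuousLinearMap.inr ℝ (ι₂ → ℝ) (ι₃ → ℝ)))) b := rfl
      _ = ∑ j, b j • (L.comp ((ContinuousLinearMap.inr ℝ (ι₁ → ℝ) ((ι₂ → ℝ) × (ι₃ → ℝ))).comp
            (ContinuousLinearMap.inr ℝ (ι₂ → ℝ) (ι₃ → ℝ)))) (Pi.single j 1) := clm_expand _ b
      _ = ∑ j, b j • L (0, (0, Pi.single j 1)) := rfl
  rw [h1, h2, h3, add_assoc]


set_option maxHeartbeats 2000000 in
/-- Lemma 3.2: in the adapted coordinates where `∂_t(Ψ∘Φ) = 0` and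
`d_y(Ψ∘Φ) = e₁ᵀ` at `(0,0)`, with `ξ₀ = dΨ(0)`, the Bolker blocks
`M₁₁ = Φ_{(t,y°)}`, `M₁₂ = Φ_{ỹ}`, `M₂₁ = ((ξ₀·Φ)_{tt}, (ξ₀·Φ)_{ty°})`,
`M₂₂ = (ξ₀·Φ)_{tỹ}`, `H = (Ψ∘Φ)_{tt}`, `C = M₂₂ − M₂₁M₁₁⁻¹M₁₂`, `Q = CᵀH⁻¹C`:
if `y = Y(ỹ)` solves `Φ(τ(ỹ), Y(ỹ)) = 0` (the surface `T_{x₀}`), and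
`Z(ỹ) = Y(ỹ) − h(ỹ)e₁` lies on `T_Σ` (i.e. `(Ψ∘Φ)(σ(ỹ),Z(ỹ)) = 0` and
`∂_t(Ψ∘Φ)(σ(ỹ),Z(ỹ)) = 0`), then `h(ỹ) = −(1/2)Qỹ·ỹ + o(|ỹ|²)`, i.e. the Hessian
of `h` at `0` is `−Q`. -/
theorem stmt_2 (n N : ℕ) (hN : 1 ≤ N) (hNn : N ≤ n - 1) (hn : 1 ≤ n)
    (Φ : (Fin N → ℝ) × ((Fin (n - N) → ℝ) × (Fin N → ℝ)) → (Fin n → ℝ))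
    (Ψ : (Fin n → ℝ) → ℝ)
    (hΦ : ContDiffAt ℝ 2 Φ (0, (0, 0)))
    (hΨ : ContDiffAt ℝ 2 Ψ 0)
    (hΦ0 : Φ (0, (0, 0)) = 0) (hΨ0 : Ψ 0 = 0)
    (hdt : ∀ τ' : Fin N → ℝ,
      fderiv ℝ (fun p => Ψ (Φ p)) (0, (0, 0)) (τ', (0, 0)) = 0)
    (hdy : ∀ v : (Fin (n - N) → ℝ) × (Fin N → ℝ),
      fderiv ℝ (fun p => Ψ (Φ p)) (0, (0, 0)) (0, v) = v.1 ⟨0, by omega⟩)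
    (M11 : Matrix (Fin n) (Fin n) ℝ) (M12 : Matrix (Fin n) (Fin N) ℝ)
    (M21 : Matrix (Fin N) (Fin n) ℝ) (M22 H : Matrix (Fin N) (Fin N) ℝ)
    (hM11 : M11 = Matrix.of fun i j =>
      fderiv ℝ Φ (0, (0, 0))
        (Sum.elim (fun k : Fin N => ((Pi.single k 1 : Fin N → ℝ), (0, 0)))
          (fun k : Fin (n - N) => (0, ((Pi.single k 1 : Fin (n - N) → ℝ), 0)))
          ((finSumFinEquiv.trans (finCongr (by omega : N + (n - N) = n))).symm j)) i)
    (hM12 : M12 = Matrix.of fun i j =>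
      fderiv ℝ Φ (0, (0, 0)) (0, (0, (Pi.single j 1 : Fin N → ℝ))) i)
    (hM21 : M21 = Matrix.of fun i j =>
      fderiv ℝ (fderiv ℝ (fun p => fderiv ℝ Ψ 0 (Φ p))) (0, (0, 0))
        ((Pi.single i 1 : Fin N → ℝ), (0, 0))
        (Sum.elim (fun k : Fin N => ((Pi.single k 1 : Fin N → ℝ), (0, 0)))
          (fun k : Fin (n - N) => (0, ((Pi.single k 1 : Fin (n - N) → ℝ), 0)))
          ((finSumFinEquiv.trans (finCongr (by omega : N + (n - N) = n))).symm j)))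
    (hM22 : M22 = Matrix.of fun i j =>
      fderiv ℝ (fderiv ℝ (fun p => fderiv ℝ Ψ 0 (Φ p))) (0, (0, 0))
        ((Pi.single i 1 : Fin N → ℝ), (0, 0))
        (0, (0, (Pi.single j 1 : Fin N → ℝ))))
    (hH : H = Matrix.of fun i j =>
      fderiv ℝ (fderiv ℝ (fun p => Ψ (Φ p))) (0, (0, 0))
        ((Pi.single i 1 : Fin N → ℝ), (0, 0))
        ((Pi.single j 1 : Fin N → ℝ), (0, 0)))
    (hM11inv : IsUnit M11.det) (hHinv : IsUnit H.det)
    (C : Matrix (Fin N) (Fin N) ℝ) (hC : C = M22 - M21 * M11⁻¹ * M12)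
    (Q : Matrix (Fin N) (Fin N) ℝ) (hQ : Q = C.transpose * H⁻¹ * C)
    (τ : (Fin N → ℝ) → (Fin N → ℝ)) (Yo : (Fin N → ℝ) → (Fin (n - N) → ℝ))
    (hτ : ContDiffAt ℝ 2 τ 0) (hYo : ContDiffAt ℝ 2 Yo 0)
    (hτ0 : τ 0 = 0) (hYo0 : Yo 0 = 0)
    (hTx : ∀ᶠ yt in 𝓝 (0 : Fin N → ℝ), Φ (τ yt, (Yo yt, yt)) = 0)
    (σ : (Fin N → ℝ) → (Fin N → ℝ)) (h : (Fin N → ℝ) → ℝ)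
    (hσ : ContDiffAt ℝ 2 σ 0) (hh : ContDiffAt ℝ 2 h 0)
    (hσ0 : σ 0 = 0) (hh0 : h 0 = 0)
    (hTs : ∀ᶠ yt in 𝓝 (0 : Fin N → ℝ),
      Ψ (Φ (σ yt, (Yo yt - h yt • (Pi.single ⟨0, by omega⟩ 1 : Fin (n - N) → ℝ), yt))) = 0 ∧
      ∀ τ' : Fin N → ℝ,
        fderiv ℝ (fun p => Ψ (Φ p))
          (σ yt, (Yo yt - h yt • (Pi.single ⟨0, by omega⟩ 1 : Fin (n - N) → ℝ), yt))
          (τ', (0, 0)) = 0) :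
    (fun yt : Fin N → ℝ => h yt + (1 / 2) * dotProduct (Q.mulVec yt) yt)
      =o[𝓝 0] fun yt => ‖yt‖ ^ 2 := by
  classical
  have hnN : 0 < n - N := by omega
  -- abbreviations
  set F : (Fin N → ℝ) × ((Fin (n - N) → ℝ) × (Fin N → ℝ)) → ℝ := fun p => Ψ (Φ p) with hFdef
  set i0 : Fin (n - N) := ⟨0, by omega⟩ with hi0def
  set e1 : Fin (n - N) → ℝ := Pi.single i0 1 with he1def
  set A : (Fin N → ℝ) → (Fin N → ℝ) × ((Fin (n - N) → ℝ) × (Fin N → ℝ)) :=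
    fun y => (τ y, (Yo y, y)) with hAdef
  set B : (Fin N → ℝ) → (Fin N → ℝ) × ((Fin (n - N) → ℝ) × (Fin N → ℝ)) :=
    fun y => (σ y, (Yo y - h y • e1, y)) with hBdef
  have hF : ContDiffAt ℝ 2 F (0, (0, 0)) := by
    have hΨ' : ContDiffAt ℝ 2 Ψ (Φ (0, (0, 0))) := by rw [hΦ0]; exact hΨ
    exact hΨ'.comp _ hΦ
  have hA : ContDiffAt ℝ 2 A 0 := hτ.prodMk (hYo.prodMk contDiffAt_id)
  have hB : ContDiffAt ℝ 2 B 0 :=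
    hσ.prodMk ((hYo.sub (hh.smul (contDiffAt_const (c := e1)))).prodMk contDiffAt_id)
  have hA0 : A 0 = (0, (0, 0)) := by simp [hAdef, hτ0, hYo0]
  have hB0 : B 0 = (0, (0, 0)) := by simp [hBdef, hσ0, hYo0, hh0]
  have hTxev : ∀ᶠ y in 𝓝 (0 : Fin N → ℝ), Φ (A y) = 0 := by
    filter_upwards [hTx] with y hy; exact hy
  have hFAev : ∀ᶠ y in 𝓝 (0 : Fin N → ℝ), F (A y) = 0 := by
    filter_upwards [hTxev] with y hy
    show Ψ (Φ (A y)) = 0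
    rw [hy, hΨ0]
  have hFBev : ∀ᶠ y in 𝓝 (0 : Fin N → ℝ), F (B y) = 0 := by
    filter_upwards [hTs] with y hy; exact hy.1
  -- first derivatives of A and B
  set Dτ := fderiv ℝ τ 0 with hDτ
  set Dσ := fderiv ℝ σ 0 with hDσ
  set DY := fderiv ℝ Yo 0 with hDY
  set Dh := fderiv ℝ h 0 with hDh
  have hτd : HasFDerivAt τ Dτ 0 := (hτ.differentiableAt two_ne_zero).hasFDerivAt
  have hσd : HasFDerivAt σ Dσ 0 := (hσ.differentiableAt two_ne_zero).hasFDerivAt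
  have hYod : HasFDerivAt Yo DY 0 := (hYo.differentiableAt two_ne_zero).hasFDerivAt
  have hhd : HasFDerivAt h Dh 0 := (hh.differentiableAt two_ne_zero).hasFDerivAt
  have hAd : HasFDerivAt A (Dτ.prod (DY.prod (ContinuousLinearMap.id ℝ _))) 0 :=
    hτd.prodMk (hYod.prodMk (hasFDerivAt_id 0))
  have hBd : HasFDerivAt B (Dσ.prod ((DY - Dh.smulRight e1).prod (ContinuousLinearMap.id ℝ _))) 0 :=
    hσd.prodMk ((hYod.sub (hhd.smul_const e1)).prodMk (hasFDerivAt_id 0))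
  have hAv : ∀ v, fderiv ℝ A 0 v = (Dτ v, (DY v, v)) := by
    intro v; rw [hAd.fderiv]; rfl
  have hBv : ∀ v, fderiv ℝ B 0 v = (Dσ v, (DY v - Dh v • e1, v)) := by
    intro v; rw [hBd.fderiv]; rfl
  -- evaluation of the first derivative of F
  have hF' : ∀ (t : Fin N → ℝ) (a : Fin (n - N) → ℝ) (b : Fin N → ℝ),
      fderiv ℝ F (0, (0, 0)) (t, (a, b)) = a i0 := by
    intro t a b
    have hsplit : ((t, (a, b)) : (Fin N → ℝ) × ((Fin (n - N) → ℝ) × (Fin N → ℝ)))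
        = (t, (0, 0)) + (0, (a, b)) := by simp
    rw [hsplit, map_add, hdt t, hdy (a, b)]
    simp [hi0def]
  -- A-curve first order
  have hAfirst : ∀ v, fderiv ℝ F (0, (0, 0)) (fderiv ℝ A 0 v) = 0 := by
    intro v
    have hDF : DifferentiableAt ℝ F (A 0) := by
      rw [hA0]; exact hF.differentiableAt two_ne_zero
    have := first_order_vanish hDF (hA.differentiableAt two_ne_zero) hFAev v
    rwa [hA0] at this
  have hBfirst : ∀ v, fderiv ℝ F (0, (0, 0)) (fderiv ℝ B 0 v) = 0 := by
    intro v
    have hDF : DifferentiableAt ℝ F (B 0) := by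
      rw [hB0]; exact hF.differentiableAt two_ne_zero
    have := first_order_vanish hDF (hB.differentiableAt two_ne_zero) hFBev v
    rwa [hB0] at this
  have hYo1 : ∀ v, DY v i0 = 0 := by
    intro v
    have := hAfirst v
    rwa [hAv v, hF'] at this
  have hDh0 : Dh = 0 := by
    ext v
    have := hBfirst v
    rw [hBv v, hF'] at this
    have h1 : (DY v - Dh v • e1) i0 = DY v i0 - Dh v := by
      simp [he1def, Pi.single_eq_same]
    rw [h1, hYo1 v] at this
    simpa using this.symm
  have hBv' : ∀ v, fderiv ℝ B 0 v = (Dσ v, (DY v, v)) := by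
    intro v; rw [hBv v, hDh0]; simp
  -- second derivative of F
  set F2 := fderiv ℝ (fderiv ℝ F) (0, (0, 0)) with hF2def
  have hsymF : ∀ a b, F2 a b = F2 b a := hF.isSymmSndFDerivAt (by simp)
  have hFA2 : ∀ v u, F2 (fderiv ℝ A 0 v) (fderiv ℝ A 0 u)
      + fderiv ℝ F (0, (0, 0)) (fderiv ℝ (fderiv ℝ A) 0 v u) = 0 := by
    intro v u
    have hf2 : ContDiffAt ℝ 2 F (A 0) := by rw [hA0]; exact hF
    have := second_order_vanish hf2 hA hFAev v u
    rwa [hA0] at this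
  have hFB2 : ∀ v u, F2 (fderiv ℝ B 0 v) (fderiv ℝ B 0 u)
      + fderiv ℝ F (0, (0, 0)) (fderiv ℝ (fderiv ℝ B) 0 v u) = 0 := by
    intro v u
    have hf2 : ContDiffAt ℝ 2 F (B 0) := by rw [hB0]; exact hF
    have := second_order_vanish hf2 hB hFBev v u
    rwa [hB0] at this
  -- the linear functional p ↦ p.2.1 i0
  set π : ((Fin N → ℝ) × ((Fin (n - N) → ℝ) × (Fin N → ℝ))) →L[ℝ] ℝ :=
    (ContinuousLinearMap.proj i0).comp
      ((ContinuousLinearMap.fst ℝ (Fin (n - N) → ℝ) (Fin N → ℝ)).comp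
        (ContinuousLinearMap.snd ℝ (Fin N → ℝ) ((Fin (n - N) → ℝ) × (Fin N → ℝ)))) with hπdef
  have hπapp : ∀ p : (Fin N → ℝ) × ((Fin (n - N) → ℝ) × (Fin N → ℝ)), π p = p.2.1 i0 := by
    intro p; rfl
  have hπF : fderiv ℝ F (0, (0, 0)) = π := by
    apply ContinuousLinearMap.ext
    intro p
    obtain ⟨t, a, b⟩ := p
    rw [hF' t a b, hπapp]
  have hYoi : ContDiffAt ℝ 2 (fun y => Yo y i0) (0 : Fin N → ℝ) := by
    exact ((ContinuousLinearMap.proj (R := ℝ) (φ := fun _ : Fin (n - N) => ℝ)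
      i0).contDiff.contDiffAt).comp 0 hYo
  set α2 := fderiv ℝ (fderiv ℝ (fun y => Yo y i0)) (0 : Fin N → ℝ) with hα2def
  set h2 := fderiv ℝ (fderiv ℝ h) (0 : Fin N → ℝ) with hh2def
  have hπA : ∀ v u, fderiv ℝ F (0, (0, 0)) (fderiv ℝ (fderiv ℝ A) 0 v u) = α2 v u := by
    intro v u
    have hcs := clm_second_deriv π hA v u
    have heq : (fun y => π (A y)) = fun y => Yo y i0 := rfl
    rw [heq] at hcs
    rw [hπF, ← hcs]
  have hπB : ∀ v u, fderiv ℝ F (0, (0, 0)) (fderiv ℝ (fderiv ℝ B) 0 v u)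
      = α2 v u - h2 v u := by
    intro v u
    have hcs := clm_second_deriv π hB v u
    have heq : (fun y => π (B y)) = fun y => Yo y i0 - h y := by
      funext y
      show (Yo y - h y • e1) i0 = Yo y i0 - h y
      simp [he1def]
    rw [heq] at hcs
    rw [hπF, ← hcs, second_deriv_sub hYoi hh v u]
  -- the key formula for the second derivative of h
  have hkey : ∀ v u, h2 v u
      = F2 (fderiv ℝ B 0 v) (fderiv ℝ B 0 u) - F2 (fderiv ℝ A 0 v) (fderiv ℝ A 0 u) := by
    intro v u
    have h1 := hFA2 v u
    have h2' := hFB2 v u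
    rw [hπA v u] at h1
    rw [hπB v u] at h2'
    linarith
  -- tangency to the surface: F₂(B'v, (t,0)) = 0
  have hB2t : ∀ (v t : Fin N → ℝ), F2 (fderiv ℝ B 0 v) (t, (0, 0)) = 0 := by
    intro v t
    have hGtdiff : DifferentiableAt ℝ
        (fun p => fderiv ℝ F p ((t, (0, 0)) :
          (Fin N → ℝ) × ((Fin (n - N) → ℝ) × (Fin N → ℝ)))) (B 0) := by
      rw [hB0]
      exact ((ContinuousLinearMap.apply ℝ ℝ
        ((t, (0, 0)) : (Fin N → ℝ) × ((Fin (n - N) → ℝ) × (Fin N → ℝ)))).differentiableAt).comp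
        _ (diff_fderiv hF)
    have hev : ∀ᶠ y in 𝓝 (0 : Fin N → ℝ),
        (fun p => fderiv ℝ F p ((t, (0, 0)) :
          (Fin N → ℝ) × ((Fin (n - N) → ℝ) × (Fin N → ℝ)))) (B y) = 0 := by
      filter_upwards [hTs] with y hy
      exact hy.2 t
    have h1 := first_order_vanish hGtdiff (hB.differentiableAt two_ne_zero) hev v
    rw [hB0, fderiv_eval hF ((t, (0, 0)) :
      (Fin N → ℝ) × ((Fin (n - N) → ℝ) × (Fin N → ℝ)))] at h1
    exact h1
  -- relation to the vector-valued second derivative of Φ on T_{x₀}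
  set ξ := fderiv ℝ Ψ 0 with hξdef
  set Φ2 := fderiv ℝ (fderiv ℝ Φ) (0, (0, 0)) with hΦ2def
  have hA2t : ∀ (v t : Fin N → ℝ), F2 (fderiv ℝ A 0 v) (t, (0, 0))
      = ξ (Φ2 (fderiv ℝ A 0 v) (t, (0, 0))) := by
    intro v t
    set u : (Fin N → ℝ) × ((Fin (n - N) → ℝ) × (Fin N → ℝ)) := (t, (0, 0)) with hudef
    have hL : fderiv ℝ (fun y => fderiv ℝ F (A y) u) 0 v = F2 (fderiv ℝ A 0 v) u := by
      have hd1 : DifferentiableAt ℝ (fun p => fderiv ℝ F p u) (A 0) := by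
        rw [hA0]
        exact ((ContinuousLinearMap.apply ℝ ℝ u).differentiableAt).comp _ (diff_fderiv hF)
      have hc := fderiv_comp (𝕜 := ℝ) 0 hd1 (hA.differentiableAt two_ne_zero)
      have he : fderiv ℝ (fun p => fderiv ℝ F p u) (A 0) = F2.flip u := by
        rw [hA0]; exact fderiv_eval hF u
      rw [he] at hc
      rw [show (fun y => fderiv ℝ F (A y) u) = ((fun p => fderiv ℝ F p u) ∘ A) from rfl, hc]
      rfl
    have hR : fderiv ℝ (fun y => fderiv ℝ F (A y) u) 0 v
        = ξ (Φ2 (fderiv ℝ A 0 v) u) := by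
      have hev : (fun y => fderiv ℝ F (A y) u)
          =ᶠ[𝓝 (0 : Fin N → ℝ)] fun y => ξ (fderiv ℝ Φ (A y) u) := by
        have hΦev : ∀ᶠ y in 𝓝 (0 : Fin N → ℝ), DifferentiableAt ℝ Φ (A y) := by
          have hA0' : Filter.Tendsto A (𝓝 0) (𝓝 (0, (0, 0))) := by
            rw [← hA0]; exact hA.continuousAt
          exact hA0'.eventually (ev_diff hΦ)
        filter_upwards [hΦev, hTxev] with y h1y h2y
        have hΨd : DifferentiableAt ℝ Ψ (Φ (A y)) := by
          rw [h2y]; exact hΨ.differentiableAt two_ne_zero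
        have hcy : fderiv ℝ F (A y) = (fderiv ℝ Ψ (Φ (A y))).comp (fderiv ℝ Φ (A y)) :=
          fderiv_comp _ hΨd h1y
        rw [hcy]
        simp only [ContinuousLinearMap.comp_apply]
        rw [h2y]
      rw [hev.fderiv_eq]
      have hΦ2d : HasFDerivAt (fderiv ℝ Φ) Φ2 (A 0) := by
        rw [hA0]; exact (diff_fderiv hΦ).hasFDerivAt
      have h1 : HasFDerivAt (fun p => fderiv ℝ Φ p u)
          ((ContinuousLinearMap.apply ℝ (Fin n → ℝ) u).comp Φ2) (A 0) :=
        ((ContinuousLinearMap.apply ℝ (Fin n → ℝ) u).hasFDerivAt).comp (A 0) hΦ2d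
      have h2' : HasFDerivAt (fun y => fderiv ℝ Φ (A y) u)
          (((ContinuousLinearMap.apply ℝ (Fin n → ℝ) u).comp Φ2).comp (fderiv ℝ A 0)) 0 :=
        h1.comp 0 (hA.differentiableAt two_ne_zero).hasFDerivAt
      have h3 : HasFDerivAt (fun y => ξ (fderiv ℝ Φ (A y) u))
          (ξ.comp ((((ContinuousLinearMap.apply ℝ (Fin n → ℝ) u).comp Φ2).comp
            (fderiv ℝ A 0)))) 0 :=
        ξ.hasFDerivAt.comp 0 h2'
      rw [h3.fderiv]
      rfl
    rw [← hL, hR]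
  -- the symmetric second derivative of ξ∘Φ
  have hξΦ : ContDiffAt ℝ 2 (fun p => ξ (Φ p)) (0, (0, 0)) :=
    (ξ.contDiff.contDiffAt).comp _ hΦ
  set S := fderiv ℝ (fderiv ℝ (fun p => ξ (Φ p))) (0, (0, 0)) with hSdef
  have hSsym : ∀ a b, S a b = S b a := hξΦ.isSymmSndFDerivAt (by simp)
  have hSΦ : ∀ a b, S a b = ξ (Φ2 a b) := fun a b => clm_second_deriv ξ hΦ a b
  have hNn' : N + (n - N) = n := by omega
  -- value of the Hessian of h
  have key : ∀ v : Fin N → ℝ, h2 v v = -(dotProduct (Q.mulVec v) v) := by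
    intro v
    set Tv := Dτ v with hTvdef
    set Sv := Dσ v with hSvdef
    set Yv := DY v with hYvdef
    set Uv : Fin n → ℝ := fun j =>
      Sum.elim (fun k => Tv k) (fun k => Yv k)
        ((finSumFinEquiv.trans (finCongr hNn')).symm j) with hUvdef
    set bas : Fin n → (Fin N → ℝ) × ((Fin (n - N) → ℝ) × (Fin N → ℝ)) := fun j =>
      Sum.elim (fun k : Fin N => ((Pi.single k 1 : Fin N → ℝ), (0, 0)))
        (fun k : Fin (n - N) => (0, ((Pi.single k 1 : Fin (n - N) → ℝ), 0)))
        ((finSumFinEquiv.trans (finCongr hNn')).symm j) with hbasdef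
    have hM11' : ∀ i j, M11 i j = fderiv ℝ Φ (0, (0, 0)) (bas j) i := by
      intro i j; rw [hM11]; rfl
    have hM12' : ∀ i j, M12 i j = fderiv ℝ Φ (0, (0, 0)) (0, (0, Pi.single j 1)) i := by
      intro i j; rw [hM12]; rfl
    have hM21' : ∀ i j, M21 i j = S (Pi.single i 1, (0, 0)) (bas j) := by
      intro i j; rw [hM21]; rfl
    have hM22' : ∀ i j, M22 i j = S (Pi.single i 1, (0, 0)) (0, (0, Pi.single j 1)) := by
      intro i j; rw [hM22]; rfl
    have hH' : ∀ i j, H i j = F2 (Pi.single i 1, (0, 0)) (Pi.single j 1, (0, 0)) := by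
      intro i j; rw [hH]; rfl
    have hsum : ∀ (g : Fin N ⊕ Fin (n - N) → ℝ),
        (∑ j : Fin n, g ((finSumFinEquiv.trans (finCongr hNn')).symm j))
          = (∑ k : Fin N, g (Sum.inl k)) + (∑ k : Fin (n - N), g (Sum.inr k)) := by
      intro g
      rw [Equiv.sum_comp (finSumFinEquiv.trans (finCongr hNn')).symm g]
      exact Fintype.sum_sum_type g
    have hexp2 : ∀ (L : ((Fin N → ℝ) × ((Fin (n - N) → ℝ) × (Fin N → ℝ))) →L[ℝ] ℝ),
        L (Tv, (Yv, v)) = (∑ j : Fin n, Uv j * L (bas j))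
          + ∑ j : Fin N, v j * L (0, (0, (Pi.single j 1 : Fin N → ℝ))) := by
      intro L
      rw [clm_expand3 L Tv Yv v]
      have e1 : (∑ j : Fin n, Uv j * L (bas j))
          = (∑ k : Fin N, Tv k * L (Pi.single k 1, (0, 0)))
            + ∑ k : Fin (n - N), Yv k * L (0, (Pi.single k 1, 0)) := by
        have h' := hsum (fun x : Fin N ⊕ Fin (n - N) =>
          (Sum.elim (fun k => Tv k) (fun k => Yv k) x) *
          L (Sum.elim (fun k : Fin N => ((Pi.single k 1 : Fin N → ℝ), (0, 0)))
            (fun k : Fin (n - N) => (0, ((Pi.single k 1 : Fin (n - N) → ℝ), 0))) x))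
        refine Eq.trans (Eq.trans (Finset.sum_congr rfl (fun j _ => rfl)) h') ?_
        exact congrArg₂ (· + ·) (Finset.sum_congr rfl fun k _ => rfl)
          (Finset.sum_congr rfl fun k _ => rfl)
      rw [e1]
      simp only [smul_eq_mul]
    -- first-order relation for Φ along A
    have hΦ1 : fderiv ℝ Φ (0, (0, 0)) (Tv, (Yv, v)) = 0 := by
      have hDΦ : DifferentiableAt ℝ Φ (A 0) := by
        rw [hA0]; exact hΦ.differentiableAt two_ne_zero
      have h' := first_order_vanish hDΦ (hA.differentiableAt two_ne_zero) hTxev v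
      rw [hA0] at h'
      rw [hAv v] at h'
      exact h'
    have hUvec : M11.mulVec Uv = -(M12.mulVec v) := by
      funext i
      have h0 := congrFun hΦ1 i
      have hLi := hexp2 ((ContinuousLinearMap.proj (R := ℝ) (φ := fun _ : Fin n => ℝ) i).comp
        (fderiv ℝ Φ (0, (0, 0))))
      have h0' : ((ContinuousLinearMap.proj (R := ℝ) (φ := fun _ : Fin n => ℝ) i).comp
          (fderiv ℝ Φ (0, (0, 0)))) (Tv, (Yv, v)) = 0 := by
        simp only [ContinuousLinearMap.comp_apply, ContinuousLinearMap.proj_apply]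
        rw [h0]
        rfl
      rw [hLi] at h0'
      have h1 : (∑ j : Fin n, M11 i j * Uv j) + (∑ j : Fin N, M12 i j * v j) = 0 := by
        calc (∑ j : Fin n, M11 i j * Uv j) + (∑ j : Fin N, M12 i j * v j)
            = (∑ j : Fin n, Uv j * ((ContinuousLinearMap.proj (R := ℝ)
                (φ := fun _ : Fin n => ℝ) i).comp (fderiv ℝ Φ (0, (0, 0)))) (bas j))
              + ∑ j : Fin N, v j * ((ContinuousLinearMap.proj (R := ℝ)
                (φ := fun _ : Fin n => ℝ) i).comp (fderiv ℝ Φ (0, (0, 0))))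
                  (0, (0, (Pi.single j 1 : Fin N → ℝ))) := by
              refine congrArg₂ (· + ·) (Finset.sum_congr rfl fun j _ => ?_)
                (Finset.sum_congr rfl fun j _ => ?_)
              · rw [hM11' i j]; exact mul_comm _ _
              · rw [hM12' i j]; exact mul_comm _ _
          _ = 0 := h0'
      simp only [Matrix.mulVec, dotProduct, Pi.neg_apply]
      linarith [h1]
    have hUval : Uv = -((M11⁻¹ * M12).mulVec v) := by
      have h' := congrArg (fun w => M11⁻¹.mulVec w) hUvec
      simpa [Matrix.mulVec_mulVec, Matrix.nonsing_inv_mul M11 hM11inv, Matrix.one_mulVec,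
        Matrix.mulVec_neg] using h'
    have hCv : ∀ i, F2 (Tv, (Yv, v)) (Pi.single i 1, (0, 0)) = C.mulVec v i := by
      intro i
      have hA2 : F2 (Tv, (Yv, v)) ((Pi.single i 1 : Fin N → ℝ), (0, 0))
          = S ((Pi.single i 1 : Fin N → ℝ), (0, 0)) (Tv, (Yv, v)) := by
        have h' := hA2t v (Pi.single i 1)
        rw [hAv v] at h'
        rw [h', ← hSΦ, hSsym]
      rw [hA2, hexp2 (S ((Pi.single i 1 : Fin N → ℝ), (0, 0)))]
      have e1 : (∑ j : Fin n, Uv j * S ((Pi.single i 1 : Fin N → ℝ), (0, 0)) (bas j))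
          = (M21.mulVec Uv) i := by
        simp only [Matrix.mulVec, dotProduct]
        exact Finset.sum_congr rfl fun j _ => by rw [hM21' i j]; exact mul_comm _ _
      have e2 : (∑ j : Fin N, v j * S ((Pi.single i 1 : Fin N → ℝ), (0, 0))
            (0, (0, (Pi.single j 1 : Fin N → ℝ)))) = (M22.mulVec v) i := by
        simp only [Matrix.mulVec, dotProduct]
        exact Finset.sum_congr rfl fun j _ => by rw [hM22' i j]; exact mul_comm _ _
      rw [e1, e2, hUval]
      have e3 : M21.mulVec (-((M11⁻¹ * M12).mulVec v)) = -((M21 * (M11⁻¹ * M12)).mulVec v) := by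
        rw [Matrix.mulVec_neg, Matrix.mulVec_mulVec]
      rw [e3, hC]
      have e4 : M22 - M21 * M11⁻¹ * M12 = M22 - M21 * (M11⁻¹ * M12) := by
        rw [Matrix.mul_assoc]
      rw [e4, Matrix.sub_mulVec]
      simp only [Pi.add_apply, Pi.neg_apply, Pi.sub_apply]
      ring
    -- the difference vector δ
    set δv : Fin N → ℝ := fun k => Sv k - Tv k with hδvdef
    have hBsplit : ((Sv, (Yv, v)) : (Fin N → ℝ) × ((Fin (n - N) → ℝ) × (Fin N → ℝ)))
        = (Tv, (Yv, v)) + (δv, (0, 0)) := by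
      refine Prod.ext ?_ ?_
      · funext k; simp [hδvdef]
      · simp
    have hB2t' : ∀ t : Fin N → ℝ,
        F2 (Tv, (Yv, v)) (t, (0, 0)) + F2 (δv, (0, 0)) (t, (0, 0)) = 0 := by
      intro t
      have h' := hB2t v t
      rw [hBv' v] at h'
      rw [hBsplit, map_add, ContinuousLinearMap.add_apply] at h'
      exact h'
    have hdt' : ∀ i, F2 (δv, (0, 0)) ((Pi.single i 1 : Fin N → ℝ), (0, 0))
        = -(C.mulVec v i) := by
      intro i
      have h' := hB2t' (Pi.single i 1)
      rw [hCv i] at h'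
      linarith
    have hHδ : H.mulVec δv = -(C.mulVec v) := by
      funext i
      simp only [Matrix.mulVec, dotProduct, Pi.neg_apply]
      have e1 : (∑ j, H i j * δv j)
          = F2 ((Pi.single i 1 : Fin N → ℝ), (0, 0)) (δv, (0, 0)) := by
        rw [clm_expand3 (F2 ((Pi.single i 1 : Fin N → ℝ), (0, 0))) δv 0 0]
        simp only [Pi.zero_apply, zero_smul, zero_mul, Finset.sum_const_zero, add_zero,
          smul_eq_mul]
        exact Finset.sum_congr rfl fun j _ => by rw [hH' i j]; exact mul_comm _ _
      rw [e1, hsymF, hdt' i]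
      simp [Matrix.mulVec, dotProduct]
    have hδval : δv = -((H⁻¹ * C).mulVec v) := by
      have h' := congrArg (fun w => H⁻¹.mulVec w) hHδ
      simpa [Matrix.mulVec_mulVec, Matrix.nonsing_inv_mul H hHinv, Matrix.one_mulVec,
        Matrix.mulVec_neg] using h'
    have hFdd : F2 (δv, (0, 0)) (δv, (0, 0))
        = dotProduct ((H⁻¹ * C).mulVec v) (C.mulVec v) := by
      rw [clm_expand3 (F2 (δv, (0, 0))) δv 0 0]
      simp only [Pi.zero_apply, zero_smul, zero_mul, Finset.sum_const_zero, add_zero,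
        smul_eq_mul]
      calc (∑ i, δv i * F2 (δv, (0, 0)) ((Pi.single i 1 : Fin N → ℝ), (0, 0)))
          = ∑ i, δv i * (-(C.mulVec v i)) :=
            Finset.sum_congr rfl fun i _ => by rw [hdt' i]
        _ = dotProduct ((H⁻¹ * C).mulVec v) (C.mulVec v) := by
            rw [hδval]
            simp only [dotProduct, Pi.neg_apply]
            exact Finset.sum_congr rfl fun i _ => by ring
    have hmain : h2 v v = -(F2 (δv, (0, 0)) (δv, (0, 0))) := by
      have hk := hkey v v
      rw [hAv v, hBv' v] at hk
      rw [hBsplit] at hk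
      have hXd : F2 (Tv, (Yv, v)) (δv, (0, 0)) + F2 (δv, (0, 0)) (δv, (0, 0)) = 0 :=
        hB2t' δv
      have hdX : F2 (δv, (0, 0)) (Tv, (Yv, v)) = F2 (Tv, (Yv, v)) (δv, (0, 0)) :=
        hsymF _ _
      have hexpand : F2 ((Tv, (Yv, v)) + (δv, (0, 0))) ((Tv, (Yv, v)) + (δv, (0, 0)))
          = F2 (Tv, (Yv, v)) (Tv, (Yv, v)) + F2 (Tv, (Yv, v)) (δv, (0, 0))
            + F2 (δv, (0, 0)) (Tv, (Yv, v)) + F2 (δv, (0, 0)) (δv, (0, 0)) := by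
        rw [map_add F2 ((Tv, (Yv, v))) ((δv, (0, 0)))]
        simp only [ContinuousLinearMap.add_apply, map_add]
        ring
      rw [hexpand] at hk
      linarith
    rw [hmain, hFdd]
    have hdot : dotProduct (Q.mulVec v) v
        = dotProduct ((H⁻¹ * C).mulVec v) (C.mulVec v) := by
      rw [hQ]
      rw [show C.transpose * H⁻¹ * C = C.transpose * (H⁻¹ * C) from by rw [Matrix.mul_assoc]]
      rw [← Matrix.mulVec_mulVec, Matrix.mulVec_transpose, ← Matrix.dotProduct_mulVec]
    rw [hdot]
  -- conclusion via Taylor expansion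
  have htay := taylor2 hh hh0 (by rw [← hDh]; exact hDh0)
  exact htay.congr (fun y => by rw [show fderiv ℝ (fderiv ℝ h) 0 = h2 from rfl, key y]; ring)
    (fun y => rfl)
end

section
/- Let M and k be nonnegative integers and let φ : ℝⁿ → ℝ be compactly supported with continuous partial derivatives up to order k, satisfying the exactness relations ∑_{j∈ℤⁿ} jᵐ φ(u − j) = uᵐ for all u ∈ ℝⁿ and all multi-indices m with |m| ≤ M. Then for every multi-index α with |α| ≤ k, every multi-index m with |α| < |m| ≤ M, and every u ∈ ℝⁿ: ∑_{j∈ℤⁿ} (∂^α φ)(u − j) (j − u)ᵐ = 0. -/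
open Filter Finset

section helpers

variable {E F : Type*} [NormedAddCommGroup E] [NormedSpace ℝ E]
  [NormedAddCommGroup F] [NormedSpace ℝ F]

lemma my_iteratedFDeriv_comp_sub :
    ∀ (N : ℕ) (f : E → F), ContDiff ℝ (N : ℕ∞) f → ∀ (c x : E),
      iteratedFDeriv ℝ N (fun y => f (y - c)) x = iteratedFDeriv ℝ N f (x - c) := by
  intro N
  induction N with
  | zero =>
    intro f hf c x
    ext v
    simp [iteratedFDeriv_zero_apply]
  | succ N ih =>
    intro f hf c x
    ext v
    rw [iteratedFDeriv_succ_apply_left, iteratedFDeriv_succ_apply_left]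
    have e1 : iteratedFDeriv ℝ N (fun y => f (y - c)) = fun y => iteratedFDeriv ℝ N f (y - c) :=
      funext fun y => ih f (hf.of_le (by exact_mod_cast Nat.le_succ N)) c y
    rw [e1]
    have hd : DifferentiableAt ℝ (iteratedFDeriv ℝ N f) (x - c) :=
      (ContDiff.differentiable_iteratedFDeriv (by exact_mod_cast Nat.lt_succ_self N) hf) (x - c)
    have hcomp : HasFDerivAt (fun y => iteratedFDeriv ℝ N f (y - c))
        (fderiv ℝ (iteratedFDeriv ℝ N f) (x - c)) x := by
      have h2 := hd.hasFDerivAt.comp x ((hasFDerivAt_id x).sub_const c)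
      exact h2
    rw [hcomp.fderiv]

lemma my_iteratedFDeriv_congr_nhds {f g : E → F} {x : E} (N : ℕ) (h : f =ᶠ[nhds x] g) :
    iteratedFDeriv ℝ N f x = iteratedFDeriv ℝ N g x := by
  rw [← iteratedFDerivWithin_univ, ← iteratedFDerivWithin_univ]
  apply Filter.EventuallyEq.iteratedFDerivWithin_eq _ h.eq_of_nhds
  rwa [nhdsWithin_univ]

end helpers

lemma my_monomial_deriv_zero {n : ℕ} (m : Fin n → ℕ) (N : ℕ) (hN : N < ∑ i, m i)
    (u : Fin n → ℝ) (v : Fin N → (Fin n → ℝ)) :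
    iteratedFDeriv ℝ N (fun w => ∏ i, (w i - u i) ^ (m i)) u v = 0 := by
  set P : (Fin n → ℝ) → ℝ := fun y => ∏ i, (y i) ^ (m i) with hPdef
  have hP : ∀ q : ℕ, ContDiff ℝ (q : ℕ∞) P :=
    fun q => contDiff_prod fun i _ => (contDiff_pi.mp contDiff_id i).pow (m i)
  have hstep : iteratedFDeriv ℝ N (fun w => ∏ i, (w i - u i) ^ (m i)) u
      = iteratedFDeriv ℝ N P 0 := by
    have e : (fun w : Fin n → ℝ => ∏ i, (w i - u i) ^ (m i)) = fun w => P (w - u) := by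
      funext w; simp [hPdef]
    rw [e, my_iteratedFDeriv_comp_sub N P (hP N) u u, sub_self]
  rw [hstep]
  set A := iteratedFDeriv ℝ N P 0 with hA
  have hhom : (fun y : Fin n → ℝ => P ((2:ℝ) • y))
      = fun y => ((2:ℝ) ^ (∑ i, m i)) • P y := by
    funext y
    simp only [hPdef, Pi.smul_apply, smul_eq_mul, mul_pow]
    rw [Finset.prod_mul_distrib, Finset.prod_pow_eq_pow_sum]
  have h2 : iteratedFDeriv ℝ N (fun y => P ((2:ℝ) • y)) 0 v = (2:ℝ) ^ N * A v := by
    have e : (fun y : Fin n → ℝ => P ((2:ℝ) • y))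
        = P ∘ ⇑((2:ℝ) • ContinuousLinearMap.id ℝ (Fin n → ℝ)) := by
      funext y; simp [Function.comp]
    rw [e, ContinuousLinearMap.iteratedFDeriv_comp_right _ (hP N) _ le_rfl]
    simp only [map_zero]
    rw [ContinuousMultilinearMap.compContinuousLinearMap_apply]
    have e2 : (fun i => ((2:ℝ) • ContinuousLinearMap.id ℝ (Fin n → ℝ)) (v i))
        = fun i => (2:ℝ) • v i := by funext i; simp
    rw [e2, A.map_smul_univ (fun _ => (2:ℝ)) v]
    simp [smul_eq_mul]
  have h3 : iteratedFDeriv ℝ N (fun y => P ((2:ℝ) • y)) 0 v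
      = (2:ℝ) ^ (∑ i, m i) * A v := by
    rw [hhom, iteratedFDeriv_const_smul_apply' (hP N).contDiffAt]
    simp [smul_eq_mul, hA]
  have hlt : (2:ℝ) ^ N < 2 ^ (∑ i, m i) := by
    exact pow_lt_pow_right₀ one_lt_two hN
  have := h2.symm.trans h3
  nlinarith [this]

lemma my_alg_expand {n : ℕ} (S : Finset (Fin n → ℤ)) (m : Fin n → ℕ) (u w : Fin n → ℝ)
    (ψ : (Fin n → ℤ) → ℝ)
    (hex : ∀ p : Fin n → ℕ, (∀ i, p i ≤ m i) →
      ∑ j ∈ S, (∏ i, ((j i : ℝ)) ^ (p i)) * ψ j = ∏ i, (w i) ^ (p i)) :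
    ∑ j ∈ S, (∏ i, ((j i : ℝ) - u i) ^ (m i)) * ψ j = ∏ i, (w i - u i) ^ (m i) := by
  classical
  set P := Fintype.piFinset (fun i => Finset.range (m i + 1)) with hPS
  have expand : ∀ (x : Fin n → ℝ),
      (∏ i, (x i - u i) ^ (m i))
        = ∑ p ∈ P, ∏ i, ((x i) ^ (p i) * (-u i) ^ (m i - p i) * ((m i).choose (p i) : ℝ)) := by
    intro x
    rw [hPS]
    have h1 : ∏ i, (x i - u i) ^ (m i)
        = ∏ i, ∑ q ∈ Finset.range (m i + 1),
            (x i) ^ q * (-u i) ^ (m i - q) * ((m i).choose q : ℝ) := by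
      apply Finset.prod_congr rfl
      intro i _
      rw [sub_eq_add_neg, add_pow]
    rw [h1]
    exact Finset.prod_univ_sum _ _
  calc ∑ j ∈ S, (∏ i, ((j i : ℝ) - u i) ^ (m i)) * ψ j
      = ∑ j ∈ S, (∑ p ∈ P, ∏ i, (((j i : ℝ)) ^ (p i) * (-u i) ^ (m i - p i)
          * ((m i).choose (p i) : ℝ))) * ψ j := by
        apply Finset.sum_congr rfl; intro j _; rw [expand]
    _ = ∑ p ∈ P, ∑ j ∈ S, (∏ i, (((j i : ℝ)) ^ (p i) * (-u i) ^ (m i - p i)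
          * ((m i).choose (p i) : ℝ))) * ψ j := by
        simp_rw [Finset.sum_mul]; rw [Finset.sum_comm]
    _ = ∑ p ∈ P, (∏ i, ((-u i) ^ (m i - p i) * ((m i).choose (p i) : ℝ)))
          * ∑ j ∈ S, (∏ i, ((j i : ℝ)) ^ (p i)) * ψ j := by
        apply Finset.sum_congr rfl; intro p _
        rw [Finset.mul_sum]
        apply Finset.sum_congr rfl; intro j _
        simp only [Finset.prod_mul_distrib]
        ring
    _ = ∑ p ∈ P, (∏ i, ((-u i) ^ (m i - p i) * ((m i).choose (p i) : ℝ)))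
          * ∏ i, (w i) ^ (p i) := by
        apply Finset.sum_congr rfl; intro p hp
        rw [hex p (fun i => Nat.lt_succ_iff.mp
          (Finset.mem_range.mp (Fintype.mem_piFinset.mp hp i)))]
    _ = ∑ p ∈ P, ∏ i, ((w i) ^ (p i) * (-u i) ^ (m i - p i) * ((m i).choose (p i) : ℝ)) := by
        apply Finset.sum_congr rfl; intro p _
        simp only [Finset.prod_mul_distrib]
        ring
    _ = ∏ i, (w i - u i) ^ (m i) := (expand w).symm

/-- If a compactly supported `φ ∈ C^k(ℝⁿ)` reproduces all monomials of
degree `≤ M` (exactness: `∑_{j∈ℤⁿ} jᵐ φ(u−j) = uᵐ` for `|m| ≤ M`), then for every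
mixed partial derivative `∂^α` of order `|α| ≤ k` (encoded by a list `L` of coordinate
directions) and every multi-index `m` with `|α| < |m| ≤ M` one has
`∑_{j∈ℤⁿ} (∂^α φ)(u − j) (j − u)ᵐ = 0`. -/
theorem stmt_8 (n M k : ℕ) (φ : (Fin n → ℝ) → ℝ)
    (hsupp : HasCompactSupport φ)
    (hsmooth : ContDiff ℝ (k : ℕ∞) φ)
    (hexact : ∀ (u : Fin n → ℝ) (m : Fin n → ℕ), (∑ i, m i) ≤ M →
      ∑' j : Fin n → ℤ,
        (∏ i, ((j i : ℝ)) ^ (m i)) * φ (u - fun i => (j i : ℝ))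
        = ∏ i, (u i) ^ (m i))
    (L : List (Fin n)) (hL : L.length ≤ k)
    (m : Fin n → ℕ) (hm1 : L.length < ∑ i, m i) (hm2 : (∑ i, m i) ≤ M)
    (u : Fin n → ℝ) :
    ∑' j : Fin n → ℤ,
      (iteratedFDeriv ℝ L.length φ (u - fun i => (j i : ℝ))
          (fun i => Pi.single (L.get i) 1)) *
        (∏ i, ((j i : ℝ) - u i) ^ (m i)) = 0 := by
  classical
  set N := L.length with hNdef
  have hφN : ContDiff ℝ (N : ℕ∞) φ := hsmooth.of_le (by exact_mod_cast hL)
  obtain ⟨R, hR⟩ := hsupp.isCompact.isBounded.subset_closedBall 0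
  set B : ℤ := ⌈R + ‖u‖ + 1⌉ with hB
  set S : Finset (Fin n → ℤ) := Fintype.piFinset (fun _ => Finset.Icc (-B) B) with hS
  -- off-S vanishing
  have hout : ∀ w : Fin n → ℝ, ‖w - u‖ < 1 → ∀ j : Fin n → ℤ, j ∉ S →
      (w - fun i => (j i : ℝ)) ∉ tsupport φ := by
    intro w hw j hj hmem
    have hball := hR hmem
    rw [Metric.mem_closedBall, dist_zero_right] at hball
    rw [hS, Fintype.mem_piFinset] at hj
    push_neg at hj
    obtain ⟨i, hi⟩ := hj
    rw [Finset.mem_Icc] at hi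
    have habs : B < |j i| := by
      rcases abs_cases (j i) with ⟨he, h0⟩ | ⟨he, h0⟩ <;> omega
    have h1 : |w i - (j i : ℝ)| ≤ ‖w - fun i => (j i : ℝ)‖ := by
      simpa [Real.norm_eq_abs] using norm_le_pi_norm (w - fun i => (j i : ℝ)) i
    have h3 : |w i| ≤ ‖w‖ := by simpa [Real.norm_eq_abs] using norm_le_pi_norm w i
    have h4 : ‖w‖ - ‖u‖ ≤ ‖w - u‖ := norm_sub_norm_le w u
    have h5 : R + ‖u‖ + 1 ≤ (B : ℝ) := Int.le_ceil _
    have h6 : (B : ℝ) < |(j i : ℝ)| := by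
      rw [← Int.cast_abs]
      exact_mod_cast habs
    have h7 : |(j i : ℝ)| - |w i| ≤ |w i - (j i : ℝ)| := by
      have := abs_sub_abs_le_abs_sub ((j i : ℝ)) (w i)
      rw [abs_sub_comm] at this
      linarith
    linarith
  have hu1 : ‖u - u‖ < 1 := by simp
  have hzero : ∀ j : Fin n → ℤ, j ∉ S →
      (iteratedFDeriv ℝ N φ (u - fun i => (j i : ℝ)) (fun i => Pi.single (L.get i) 1)) *
        (∏ i, ((j i : ℝ) - u i) ^ (m i)) = 0 := by
    intro j hj
    have h1 : iteratedFDeriv ℝ N φ (u - fun i => (j i : ℝ)) = 0 := by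
      by_contra hne
      exact hout u hu1 j hj (support_iteratedFDeriv_subset N hne)
    rw [h1]
    simp
  rw [tsum_eq_sum hzero]
  have htrans : ∀ j : Fin n → ℤ,
      ContDiff ℝ (N : ℕ∞) (fun w : Fin n → ℝ => φ (w - fun i => (j i : ℝ))) :=
    fun j => hφN.comp (contDiff_id.sub contDiff_const)
  set g : (Fin n → ℝ) → ℝ :=
    fun w => ∑ j ∈ S, (∏ i, ((j i : ℝ) - u i) ^ (m i)) • φ (w - fun i => (j i : ℝ)) with hg
  have hBstep : ∑ j ∈ S,
      (iteratedFDeriv ℝ N φ (u - fun i => (j i : ℝ)) (fun i => Pi.single (L.get i) 1)) *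
        (∏ i, ((j i : ℝ) - u i) ^ (m i))
      = iteratedFDeriv ℝ N g u (fun i => Pi.single (L.get i) 1) := by
    have h1 : iteratedFDeriv ℝ N g = ∑ j ∈ S, iteratedFDeriv ℝ N
        (fun w => (∏ i, ((j i : ℝ) - u i) ^ (m i)) • φ (w - fun i => (j i : ℝ))) := by
      rw [hg]
      exact iteratedFDeriv_sum (fun j _ => (htrans j).const_smul _)
    rw [congrFun h1 u]
    simp only [Finset.sum_apply, ContinuousMultilinearMap.sum_apply]
    apply Finset.sum_congr rfl
    intro j _
    rw [iteratedFDeriv_const_smul_apply' (htrans j).contDiffAt,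
      my_iteratedFDeriv_comp_sub N φ hφN _ u]
    simp [smul_eq_mul, mul_comm]
  rw [hBstep]
  have hCstep : g =ᶠ[nhds u] fun w => ∏ i, (w i - u i) ^ (m i) := by
    filter_upwards [Metric.ball_mem_nhds u one_pos] with w hw
    rw [Metric.mem_ball, dist_eq_norm] at hw
    have hfin : ∀ p : Fin n → ℕ, (∀ i, p i ≤ m i) →
        ∑ j ∈ S, (∏ i, ((j i : ℝ)) ^ (p i)) * φ (w - fun i => (j i : ℝ))
          = ∏ i, (w i) ^ (p i) := by
      intro p hp
      rw [← hexact w p (le_trans (Finset.sum_le_sum fun i _ => hp i) hm2)]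
      refine (tsum_eq_sum fun j hj => ?_).symm
      rw [image_eq_zero_of_notMem_tsupport (hout w hw j hj)]
      ring
    have halg := my_alg_expand S m u w (fun j => φ (w - fun i => (j i : ℝ))) hfin
    rw [hg]
    simpa [smul_eq_mul] using halg
  rw [my_iteratedFDeriv_congr_nhds N hCstep]
  exact my_monomial_deriv_zero m N hm1 u _
end

section
/- Let n, N ≥ 1 be integers and let A : ℝ^N → ℝⁿ be a linear map such that Aᵀm ≠ 0 for every m ∈ ℤⁿ \ {0}. Let φ : ℝⁿ → ℝ be continuous and ℤⁿ-periodic (φ(u + m) = φ(u) for all m ∈ ℤⁿ, u ∈ ℝⁿ), let B ⊂ ℝ^N be a bounded measurable set, let r : ℝ^N → ℝⁿ be continuous, and let c : (0,1) → ℝⁿ be an arbitrary function. Then lim_{ε→0⁺} ∫_B φ(ε^{−1/2} A ŷ + c(ε) + r(ŷ)) dŷ = |B| · ∫_{[0,1]ⁿ} φ(u) du, where |B| denotes the Lebesgue measure of B. -/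
open MeasureTheory Matrix
open scoped Topology

section Aux10

open Filter Set
open scoped FourierTransform Real ComplexConjugate

noncomputable section

/-- The basic character `t ↦ exp(2πit)`. -/
private def eC (t : ℝ) : ℂ := Complex.exp (2 * Real.pi * t * Complex.I)

private lemma eC_continuous : Continuous eC := by
  unfold eC; fun_prop

private lemma eC_add (s t : ℝ) : eC (s + t) = eC s * eC t := by
  unfold eC; rw [← Complex.exp_add]; congr 1; push_cast; ring

private lemma eC_norm (t : ℝ) : ‖eC t‖ = 1 := by
  unfold eC
  rw [Complex.norm_exp]
  norm_num [Complex.mul_re, Complex.I_re, Complex.I_im]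

private lemma eC_zero : eC 0 = 1 := by simp [eC]

private lemma eC_sum {ι : Type*} (s : Finset ι) (t : ι → ℝ) :
    eC (∑ i ∈ s, t i) = ∏ i ∈ s, eC (t i) := by
  classical
  induction s using Finset.induction_on with
  | empty => simp [eC_zero]
  | insert a s h ih => rw [Finset.sum_insert h, Finset.prod_insert h, eC_add, ih]

private lemma int_eC_Icc (k : ℤ) (hk : k ≠ 0) :
    ∫ t in Icc (0:ℝ) 1, eC (k * t) = 0 := by
  have hc : (2 * (Real.pi:ℂ) * Complex.I * k) ≠ 0 := by
    simp [Real.pi_ne_zero, Complex.I_ne_zero, hk]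
  have h1 : ∀ t : ℝ, eC (k * t) = Complex.exp ((2 * (Real.pi:ℂ) * Complex.I * k) * t) := by
    intro t; unfold eC; congr 1; push_cast; ring
  simp_rw [h1]
  rw [MeasureTheory.integral_Icc_eq_integral_Ioc,
    ← intervalIntegral.integral_of_le (zero_le_one), integral_exp_mul_complex hc]
  have h2 : Complex.exp (2 * (Real.pi:ℂ) * Complex.I * k * 1) = 1 := by
    rw [show (2 * (Real.pi:ℂ) * Complex.I * k * 1) = (k:ℂ) * (2 * (Real.pi:ℂ) * Complex.I) by ring]
    exact Complex.exp_int_mul_two_pi_mul_I k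
  push_cast
  rw [h2]
  simp

private lemma int_box {n : ℕ} (m : Fin n → ℤ) (hm : m ≠ 0) :
    ∫ u in Icc (0 : Fin n → ℝ) 1, eC (∑ i, (m i : ℝ) * u i) = 0 := by
  have hind : ∀ u : Fin n → ℝ,
      (Icc (0 : Fin n → ℝ) 1).indicator (fun u => eC (∑ i, (m i : ℝ) * u i)) u
      = ∏ i, (Icc (0:ℝ) 1).indicator (fun t => eC ((m i : ℝ) * t)) (u i) := by
    intro u
    by_cases hu : u ∈ Icc (0 : Fin n → ℝ) 1
    · rw [indicator_of_mem hu, eC_sum]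
      refine Finset.prod_congr rfl fun i _ => ?_
      rw [indicator_of_mem]
      exact ⟨hu.1 i, hu.2 i⟩
    · rw [indicator_of_notMem hu]
      obtain ⟨i, hi⟩ : ∃ i, u i ∉ Icc (0:ℝ) 1 := by
        by_contra h
        push_neg at h
        exact hu ⟨fun i => (h i).1, fun i => (h i).2⟩
      refine (Finset.prod_eq_zero (Finset.mem_univ i) ?_).symm
      rw [indicator_of_notMem hi]
  rw [← MeasureTheory.integral_indicator measurableSet_Icc]
  simp_rw [hind]
  rw [MeasureTheory.volume_pi, MeasureTheory.integral_fintype_prod_eq_prod (ι := Fin n)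
    (f := fun i => (Icc (0:ℝ) 1).indicator (fun t => eC ((m i : ℝ) * t)))]
  obtain ⟨i, hi⟩ : ∃ i, m i ≠ 0 := by
    by_contra h; push_neg at h; exact hm (funext h)
  refine Finset.prod_eq_zero (Finset.mem_univ i) ?_
  rw [MeasureTheory.integral_indicator measurableSet_Icc]
  exact int_eC_Icc (m i) hi

private lemma tendsto_s : Tendsto (fun ε : ℝ => ε ^ (-(1:ℝ)/2)) (𝓝[>] (0:ℝ)) atTop := by
  have h1 : Tendsto (fun ε : ℝ => ε ^ ((1:ℝ)/2)) (𝓝[>] (0:ℝ)) (𝓝[>] 0) := by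
    apply tendsto_nhdsWithin_of_tendsto_nhds_of_eventually_within
    · have := (Real.continuousAt_rpow_const 0 ((1:ℝ)/2) (Or.inr (by norm_num))).tendsto
      rw [Real.zero_rpow (by norm_num)] at this
      exact this.comp (nhdsWithin_le_nhds (s := Ioi (0:ℝ)))
    · filter_upwards [self_mem_nhdsWithin] with ε (hε : 0 < ε)
      exact Real.rpow_pos_of_pos hε _
  have h2 := h1.inv_tendsto_nhdsGT_zero
  refine h2.congr' ?_
  filter_upwards [self_mem_nhdsWithin] with ε (hε : 0 < ε)
  simp only [Pi.inv_apply]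
  rw [← Real.rpow_neg hε.le]
  norm_num

/-- Riemann–Lebesgue lemma in the form we need. -/
private lemma rl {N : ℕ} (v : Fin N → ℝ) (hv : v ≠ 0) (g : (Fin N → ℝ) → ℂ) :
    Tendsto (fun ε : ℝ => ∫ y, eC (ε ^ (-(1:ℝ)/2) * (v ⬝ᵥ y)) * g y) (𝓝[>] (0:ℝ)) (𝓝 0) := by
  let L0 : (Fin N → ℝ) →ₗ[ℝ] ℝ := ∑ j, v j • LinearMap.proj j
  have hL0 : ∀ y, L0 y = v ⬝ᵥ y := by
    intro y
    simp [L0, dotProduct, LinearMap.sum_apply]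
  let L : (Fin N → ℝ) →L[ℝ] ℝ := -(LinearMap.toContinuousLinearMap L0)
  have hL : ∀ y, L y = -(v ⬝ᵥ y) := by intro y; simp [L, hL0]
  have hLne : L ≠ 0 := by
    intro h
    have : L v = 0 := by rw [h]; rfl
    rw [hL v, neg_eq_zero] at this
    exact hv ((dotProduct_self_eq_zero).mp this)
  set w : ℝ → ((Fin N → ℝ) →L[ℝ] ℝ) := fun ε => ε ^ (-(1:ℝ)/2) • L with hw
  have hwc : Tendsto w (𝓝[>] (0:ℝ)) (Filter.cocompact _) := by
    rw [← Metric.cobounded_eq_cocompact, ← tendsto_norm_atTop_iff_cobounded]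
    have : ∀ ε, ‖w ε‖ = |ε ^ (-(1:ℝ)/2)| * ‖L‖ := by
      intro ε
      rw [hw]
      show ‖ε ^ (-(1:ℝ)/2) • L‖ = _
      exact (norm_smul (ε ^ (-(1:ℝ)/2)) L).trans (by rw [Real.norm_eq_abs])
    simp_rw [this]
    exact (tendsto_abs_atTop_atTop.comp tendsto_s).atTop_mul_const
      (norm_pos_iff.mpr hLne)
  have hRL := (tendsto_integral_exp_smul_cocompact g volume).comp hwc
  refine hRL.congr ?_
  intro ε
  refine integral_congr_ae (Eventually.of_forall fun y => ?_)
  show 𝐞 (-(w ε) y) • g y = eC (ε ^ (-(1:ℝ)/2) * (v ⬝ᵥ y)) * g y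
  rw [Circle.smul_def, Real.fourierChar_apply]
  have h3 : -((w ε) y) = ε ^ (-(1:ℝ)/2) * (v ⬝ᵥ y) := by
    rw [hw]
    simp only [ContinuousLinearMap.coe_smul', Pi.smul_apply, hL, smul_eq_mul]
    ring
  rw [h3]
  unfold eC
  congr 2
  push_cast
  ring

variable {n : ℕ}

private instance : Fact ((0:ℝ) < 1) := ⟨one_pos⟩

/-- characters of the torus -/
private def chr (m : Fin n → ℤ) : C(Fin n → AddCircle (1:ℝ), ℂ) :=
  ∏ i, (fourier (m i)).comp ⟨fun x => x i, continuous_apply i⟩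

private lemma chr_apply (m : Fin n → ℤ) (x : Fin n → AddCircle (1:ℝ)) :
    chr m x = ∏ i, fourier (m i) (x i) := by
  simp [chr]

private lemma chr_coe (m : Fin n → ℤ) (u : Fin n → ℝ) :
    chr m (fun i => (u i : AddCircle (1:ℝ))) = eC (∑ i, (m i : ℝ) * u i) := by
  rw [chr_apply, eC_sum]
  refine Finset.prod_congr rfl fun i _ => ?_
  rw [fourier_coe_apply]
  unfold eC
  congr 1
  push_cast
  ring

private lemma chr_zero : chr (0 : Fin n → ℤ) = 1 := by
  ext x
  simp [chr_apply, fourier_zero]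

private lemma chr_mul (m m' : Fin n → ℤ) : chr m * chr m' = chr (m + m') := by
  ext x
  simp only [ContinuousMap.mul_apply, chr_apply, Pi.add_apply, fourier_add]
  rw [← Finset.prod_mul_distrib]

private lemma chr_star (m : Fin n → ℤ) : star (chr m) = chr (-m) := by
  ext x
  simp only [ContinuousMap.star_apply, chr_apply, Pi.neg_apply, fourier_neg]
  rw [← map_prod (starRingEnd ℂ)]
  rfl

private lemma span_chr_dense (Ψ : C(Fin n → AddCircle (1:ℝ), ℂ)) :
    Ψ ∈ closure (↑(Submodule.span ℂ (Set.range (@chr n))) :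
      Set C(Fin n → AddCircle (1:ℝ), ℂ)) := by
  set S : Set C(Fin n → AddCircle (1:ℝ), ℂ) := Set.range (@chr n)
  have hsub : ↑(StarAlgebra.adjoin ℂ S) ⊆
      (↑(Submodule.span ℂ S) : Set C(Fin n → AddCircle (1:ℝ), ℂ)) := by
    intro x hx
    rw [SetLike.mem_coe] at hx ⊢
    induction hx using StarAlgebra.adjoin_induction with
    | mem x h => exact Submodule.subset_span h
    | algebraMap r =>
        rw [Algebra.algebraMap_eq_smul_one, ← chr_zero]
        exact Submodule.smul_mem _ _ (Submodule.subset_span ⟨0, rfl⟩)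
    | add x y hx hy ihx ihy => exact Submodule.add_mem _ ihx ihy
    | mul x y hx hy ihx ihy =>
        have h1 : x * y ∈ Submodule.span ℂ S * Submodule.span ℂ S :=
          Submodule.mul_mem_mul ihx ihy
        rw [Submodule.span_mul_span] at h1
        refine Submodule.span_le.mpr ?_ h1
        rw [Set.mul_subset_iff]
        rintro _ ⟨m, rfl⟩ _ ⟨m', rfl⟩
        rw [chr_mul]
        exact Submodule.subset_span ⟨m + m', rfl⟩
    | star x hx ihx =>
        clear hx
        induction ihx using Submodule.span_induction with
        | mem x h =>
            obtain ⟨m, rfl⟩ := h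
            rw [chr_star]
            exact Submodule.subset_span ⟨-m, rfl⟩
        | zero => simp only [star_zero]; exact Submodule.zero_mem _
        | add a b ha hb iha ihb => rw [star_add]; exact Submodule.add_mem _ iha ihb
        | smul c a ha iha => rw [star_smul]; exact Submodule.smul_mem _ _ iha
  have hsep : (StarAlgebra.adjoin ℂ S).SeparatesPoints := by
    intro x y hxy
    obtain ⟨i, hi⟩ := Function.ne_iff.mp hxy
    refine ⟨_, ⟨chr (Pi.single i 1), StarAlgebra.subset_adjoin ℂ S ⟨_, rfl⟩, rfl⟩, ?_⟩
    have hval : ∀ z : Fin n → AddCircle (1:ℝ),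
        chr (Pi.single i 1) z = (AddCircle.toCircle (z i) : ℂ) := by
      intro z
      rw [chr_apply]
      rw [Finset.prod_eq_single i]
      · rw [Pi.single_eq_same, fourier_one]
      · intro j _ hj
        rw [Pi.single_eq_of_ne hj, fourier_zero]
      · intro h; exact absurd (Finset.mem_univ i) h
    show chr (Pi.single i 1) x ≠ chr (Pi.single i 1) y
    rw [hval, hval]
    intro h
    exact hi (AddCircle.injective_toCircle one_ne_zero (Subtype.coe_injective h))
  have htop := ContinuousMap.starSubalgebra_topologicalClosure_eq_top_of_separatesPoints
    (StarAlgebra.adjoin ℂ S) hsep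
  have hΨ : Ψ ∈ (StarAlgebra.adjoin ℂ S).topologicalClosure := htop ▸ trivial
  exact closure_mono hsub hΨ

end

end Aux10

/-- equidistribution limit (7.23)–(7.27): if the linear map
`A : ℝ^N → ℝⁿ` satisfies `Aᵀm ≠ 0` for all nonzero `m ∈ ℤⁿ`, `φ` is continuous
and `ℤⁿ`-periodic, `B` is a bounded measurable set, `r` is continuous and
`c : (0,1) → ℝⁿ` is arbitrary, then
`∫_B φ(ε^{−1/2}Aŷ + c(ε) + r(ŷ)) dŷ → |B| ∫_{[0,1]ⁿ} φ(u) du` as `ε → 0⁺`. -/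
theorem stmt_10 (n N : ℕ) (hn : 1 ≤ n) (hN : 1 ≤ N)
    (A : Matrix (Fin n) (Fin N) ℝ)
    (hA : ∀ m : Fin n → ℤ, m ≠ 0 →
      A.transpose.mulVec (fun i => (m i : ℝ)) ≠ 0)
    (φ : (Fin n → ℝ) → ℝ) (hφc : Continuous φ)
    (hφp : ∀ (m : Fin n → ℤ) (u : Fin n → ℝ), φ (u + fun i => (m i : ℝ)) = φ u)
    (B : Set (Fin N → ℝ)) (hBb : Bornology.IsBounded B) (hBm : MeasurableSet B)
    (r : (Fin N → ℝ) → (Fin n → ℝ)) (hr : Continuous r)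
    (c : ℝ → (Fin n → ℝ)) :
    Filter.Tendsto
      (fun ε : ℝ =>
        ∫ yh in B, φ (ε ^ (-(1 : ℝ) / 2) • A.mulVec yh + c ε + r yh))
      (𝓝[>] 0)
      (𝓝 ((volume B).toReal * ∫ u in Set.Icc (0 : Fin n → ℝ) 1, φ u)) := by
  classical
  open Filter Set in
  -- the projection to the torus
  set π : (Fin n → ℝ) → (Fin n → AddCircle (1:ℝ)) :=
    fun y i => ((y i : ℝ) : AddCircle (1:ℝ)) with hπdef
  have hπ : IsOpenQuotientMap π :=
    IsOpenQuotientMap.piMap fun _ => QuotientAddGroup.isOpenQuotientMap_mk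
  -- φ factors through the torus
  have hfib : ∀ a b : Fin n → ℝ, π a = π b → φ a = φ b := by
    intro a b hab
    have h1 : ∀ i, ∃ k : ℤ, b i - a i = k := by
      intro i
      have h0 : ((b i : ℝ) : AddCircle (1:ℝ)) = ((a i : ℝ) : AddCircle (1:ℝ)) :=
        (congrFun hab i).symm
      have h2 : b i - a i ∈ AddSubgroup.zmultiples (1:ℝ) :=
        (QuotientAddGroup.eq_iff_sub_mem).mp h0
      obtain ⟨k, hk⟩ := (AddSubgroup.mem_zmultiples_iff).mp h2
      exact ⟨k, by simpa using hk.symm⟩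
    choose m hm using h1
    have hba : b = a + fun i => (m i : ℝ) := by
      funext i
      have := hm i
      simp only [Pi.add_apply]
      linarith
    rw [hba] at *
    exact (hφp m a).symm
  -- the lift of φ to the torus
  set Φ0 : (Fin n → AddCircle (1:ℝ)) → ℂ :=
    fun x => ((φ (Function.surjInv hπ.surjective x) : ℝ) : ℂ) with hΦ0def
  have hΦ0π : ∀ u, Φ0 (π u) = ((φ u : ℝ) : ℂ) := by
    intro u
    have h := hfib _ _ (Function.surjInv_eq hπ.surjective (π u))
    show ((φ (Function.surjInv hπ.surjective (π u)) : ℝ) : ℂ) = _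
    rw [h]
  have hΦ0c : Continuous Φ0 := by
    rw [hπ.isQuotientMap.continuous_iff]
    have : Φ0 ∘ π = fun u => ((φ u : ℝ) : ℂ) := funext hΦ0π
    rw [this]
    fun_prop
  set Φ : C(Fin n → AddCircle (1:ℝ), ℂ) := ⟨Φ0, hΦ0c⟩ with hΦdef
  -- the argument map
  set F : ℝ → (Fin N → ℝ) → (Fin n → ℝ) :=
    fun ε y => ε ^ (-(1:ℝ)/2) • A.mulVec y + c ε + r y with hFdef
  have hFc : ∀ ε, Continuous (F ε) := by
    intro ε
    apply Continuous.add
    apply Continuous.add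
    · exact ((continuous_const : Continuous (fun _ : Fin N → ℝ => A)).matrix_mulVec (continuous_id : Continuous (fun y : Fin N → ℝ => y))).const_smul (ε ^ (-(1:ℝ)/2))
    · exact continuous_const
    · exact hr
  have hBfin : volume B ≠ ⊤ := hBb.measure_lt_top.ne
  haveI : IsFiniteMeasure (volume.restrict B) :=
    ⟨by rw [Measure.restrict_apply_univ]; exact hBb.measure_lt_top⟩
  -- integrability of everything in sight
  have hInt : ∀ (Ψ : C(Fin n → AddCircle (1:ℝ), ℂ)) (G : (Fin N → ℝ) → (Fin n → ℝ)),
      Continuous G → IntegrableOn (fun y => Ψ (π (G y))) B volume := by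
    intro Ψ G hG
    refine Measure.integrableOn_of_bounded hBfin
      ((Ψ.continuous.comp (hπ.continuous.comp hG)).aestronglyMeasurable) (M := ‖Ψ‖) ?_
    exact Filter.Eventually.of_forall fun y => Ψ.norm_coe_le_norm _
  have hIntIcc : ∀ Ψ : C(Fin n → AddCircle (1:ℝ), ℂ),
      IntegrableOn (fun u => Ψ (π u)) (Icc (0 : Fin n → ℝ) 1) volume := by
    intro Ψ
    exact (Ψ.continuous.comp hπ.continuous).integrableOn_Icc
  -- the main property
  set Pp : C(Fin n → AddCircle (1:ℝ), ℂ) → Prop := fun Ψ =>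
    Filter.Tendsto (fun ε : ℝ => ∫ y in B, Ψ (π (F ε y))) (𝓝[>] 0)
      (𝓝 (((volume B).toReal : ℂ) * ∫ u in Icc (0 : Fin n → ℝ) 1, Ψ (π u))) with hPpdef
  -- characters satisfy it
  have hchar : ∀ m : Fin n → ℤ, Pp (chr m) := by
    intro m
    simp only [hPpdef]
    by_cases hm : m = 0
    · subst hm
      simp only [chr_zero, ContinuousMap.one_apply, setIntegral_const, smul_eq_mul, mul_one,
        Complex.real_smul]
      have h1 : (volume (Icc (0 : Fin n → ℝ) 1)).toReal = 1 := by
        rw [Real.volume_Icc_pi_toReal zero_le_one]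
        simp
      simp only [measureReal_def, h1]
      simp only [Complex.ofReal_one, mul_one]
      exact tendsto_const_nhds
    · set mR : Fin n → ℝ := fun i => (m i : ℝ) with hmRdef
      set v : Fin N → ℝ := Aᵀ *ᵥ mR with hvdef
      have hv : v ≠ 0 := hA m hm
      have hR : ∫ u in Icc (0 : Fin n → ℝ) 1, chr m (π u) = 0 := by
        have he : ∀ u : Fin n → ℝ, chr m (π u) = eC (∑ i, mR i * u i) :=
          fun u => chr_coe m u
        simp_rw [he]
        exact int_box m hm
      rw [hR, mul_zero]
      set g : (Fin N → ℝ) → ℂ := B.indicator (fun y => eC (∑ i, mR i * r y i)) with hgdef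
      have hkey := rl v hv g
      have hgB : ∀ ε : ℝ, ∫ y, eC (ε ^ (-(1:ℝ)/2) * (v ⬝ᵥ y)) * g y
          = ∫ y in B, eC (ε ^ (-(1:ℝ)/2) * (v ⬝ᵥ y)) * eC (∑ i, mR i * r y i) := by
        intro ε
        rw [← MeasureTheory.integral_indicator hBm]
        congr 1
        funext y
        rw [hgdef, Set.indicator_mul_right]
      have hLHS : ∀ ε : ℝ, ∫ y in B, chr m (π (F ε y))
          = eC (∑ i, mR i * c ε i) * ∫ y, eC (ε ^ (-(1:ℝ)/2) * (v ⬝ᵥ y)) * g y := by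
        intro ε
        rw [hgB, ← MeasureTheory.integral_const_mul]
        refine setIntegral_congr_ae hBm (Filter.Eventually.of_forall fun y _ => ?_)
        have hπF : chr m (π (F ε y)) = eC (∑ i, mR i * (F ε y) i) := chr_coe m _
        rw [hπF]
        have hsum : ∑ i, mR i * (F ε y) i
            = ε ^ (-(1:ℝ)/2) * (v ⬝ᵥ y) + (∑ i, mR i * c ε i + ∑ i, mR i * r y i) := by
          have hFi : ∀ i, mR i * (F ε y) i
              = ε ^ (-(1:ℝ)/2) * (mR i * (A *ᵥ y) i) + (mR i * c ε i + mR i * r y i) := by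
            intro i
            rw [hFdef]
            simp only [Pi.add_apply, Pi.smul_apply, smul_eq_mul]
            ring
          rw [Finset.sum_congr rfl (fun i _ => hFi i), Finset.sum_add_distrib,
            Finset.sum_add_distrib, ← Finset.mul_sum]
          have hdot : ∑ i, mR i * (A *ᵥ y) i = v ⬝ᵥ y := by
            rw [hvdef, mulVec_transpose]
            exact dotProduct_mulVec mR A y
          rw [hdot]
        rw [hsum, eC_add, eC_add]
        ring
      rw [tendsto_zero_iff_norm_tendsto_zero]
      have hnorm : ∀ ε : ℝ, ‖∫ y in B, chr m (π (F ε y))‖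
          = ‖∫ y, eC (ε ^ (-(1:ℝ)/2) * (v ⬝ᵥ y)) * g y‖ := by
        intro ε; rw [hLHS ε, norm_mul, eC_norm, one_mul]
      have hkn := hkey.norm
      rw [norm_zero] at hkn
      exact hkn.congr fun ε => (hnorm ε).symm
  -- span of characters satisfies it
  have hspan : ∀ Ψ ∈ Submodule.span ℂ (Set.range (@chr n)), Pp Ψ := by
    intro Ψ hΨ
    induction hΨ using Submodule.span_induction with
    | mem x h => obtain ⟨m, rfl⟩ := h; exact hchar m
    | zero =>
        rw [hPpdef]
        simp only [ContinuousMap.zero_apply, integral_zero, mul_zero]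
        exact tendsto_const_nhds
    | add a b ha hb iha ihb =>
        rw [hPpdef]
        have h1 : ∀ ε : ℝ, ∫ y in B, (a + b) (π (F ε y)) =
            (∫ y in B, a (π (F ε y))) + ∫ y in B, b (π (F ε y)) := by
          intro ε
          simp only [ContinuousMap.add_apply]
          exact integral_add (hInt a _ (hFc ε)) (hInt b _ (hFc ε))
        have h2 : ∫ u in Icc (0 : Fin n → ℝ) 1, (a + b) (π u) =
            (∫ u in Icc (0 : Fin n → ℝ) 1, a (π u)) + ∫ u in Icc (0 : Fin n → ℝ) 1, b (π u) := by
          simp only [ContinuousMap.add_apply]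
          exact integral_add (hIntIcc a) (hIntIcc b)
        simp only [h1, h2, mul_add]
        exact Filter.Tendsto.add iha ihb
    | smul k a ha iha =>
        rw [hPpdef]
        have h1 : ∀ ε : ℝ, ∫ y in B, (k • a) (π (F ε y)) =
            k • ∫ y in B, a (π (F ε y)) := by
          intro ε
          simp only [ContinuousMap.smul_apply]
          exact integral_smul k _
        have h2 : ∫ u in Icc (0 : Fin n → ℝ) 1, (k • a) (π u) =
            k • ∫ u in Icc (0 : Fin n → ℝ) 1, a (π u) := by
          simp only [ContinuousMap.smul_apply]
          exact integral_smul k _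
        simp only [h1, h2, smul_eq_mul, mul_left_comm]
        exact iha.const_mul k
  -- all continuous functions satisfy it, by density
  have hall : Pp Φ := by
    have hcl := span_chr_dense Φ
    simp only [hPpdef]
    rw [Metric.tendsto_nhds]
    intro η hη
    set K : ℝ := (volume B).toReal + 1 with hK
    have hK0 : 0 < K := by positivity
    have hvolK : (volume B).toReal ≤ K := by rw [hK]; linarith
    obtain ⟨Ψ, hΨmem, hΨd⟩ := Metric.mem_closure_iff.mp hcl (η / (3 * K)) (by positivity)
    have hPΨ := hspan Ψ hΨmem
    simp only [hPpdef] at hPΨ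
    have hdist0 : 0 ≤ dist Φ Ψ := dist_nonneg
    have hKd : K * (η / (3 * K)) = η / 3 := by field_simp
    have hby : (volume B).toReal * dist Φ Ψ < η / 3 := by
      calc (volume B).toReal * dist Φ Ψ ≤ K * dist Φ Ψ :=
            mul_le_mul_of_nonneg_right hvolK hdist0
        _ < K * (η / (3 * K)) := by
            exact mul_lt_mul_of_pos_left hΨd hK0
        _ = η / 3 := hKd
    have hb1 : ∀ ε : ℝ, dist (∫ y in B, Φ (π (F ε y))) (∫ y in B, Ψ (π (F ε y)))
        ≤ (volume B).toReal * dist Φ Ψ := by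
      intro ε
      rw [dist_eq_norm, ← integral_sub (hInt Φ _ (hFc ε)) (hInt Ψ _ (hFc ε))]
      have hbd : ∀ᵐ y ∂(volume.restrict B), ‖Φ (π (F ε y)) - Ψ (π (F ε y))‖ ≤ dist Φ Ψ := by
        refine Filter.Eventually.of_forall fun y => ?_
        rw [← ContinuousMap.sub_apply, dist_eq_norm]
        exact (Φ - Ψ).norm_coe_le_norm _
      have h := norm_integral_le_of_norm_le_const hbd
      rw [measureReal_restrict_apply_univ, measureReal_def] at h
      calc ‖∫ y in B, (Φ (π (F ε y)) - Ψ (π (F ε y)))‖ ≤ dist Φ Ψ * (volume B).toReal := h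
        _ = (volume B).toReal * dist Φ Ψ := mul_comm _ _
    haveI : IsFiniteMeasure (volume.restrict (Icc (0 : Fin n → ℝ) 1)) := by
      constructor
      rw [Measure.restrict_apply_univ]
      exact isCompact_Icc.measure_lt_top
    have hb2 : dist (((volume B).toReal : ℂ) * ∫ u in Icc (0 : Fin n → ℝ) 1, Φ (π u))
        (((volume B).toReal : ℂ) * ∫ u in Icc (0 : Fin n → ℝ) 1, Ψ (π u))
        ≤ (volume B).toReal * dist Φ Ψ := by
      rw [dist_eq_norm, ← mul_sub, norm_mul]
      have hnre : ‖(((volume B).toReal : ℝ) : ℂ)‖ = (volume B).toReal := by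
        rw [Complex.norm_real, Real.norm_eq_abs, abs_of_nonneg ENNReal.toReal_nonneg]
      rw [hnre, ← integral_sub (hIntIcc Φ) (hIntIcc Ψ)]
      refine mul_le_mul_of_nonneg_left ?_ ENNReal.toReal_nonneg
      have hbd : ∀ᵐ u ∂(volume.restrict (Icc (0 : Fin n → ℝ) 1)),
          ‖Φ (π u) - Ψ (π u)‖ ≤ dist Φ Ψ := by
        refine Filter.Eventually.of_forall fun u => ?_
        rw [← ContinuousMap.sub_apply, dist_eq_norm]
        exact (Φ - Ψ).norm_coe_le_norm _
      have h := norm_integral_le_of_norm_le_const hbd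
      rw [measureReal_restrict_apply_univ, measureReal_def] at h
      have h1 : (volume (Icc (0 : Fin n → ℝ) 1)).toReal = 1 := by
        rw [Real.volume_Icc_pi_toReal zero_le_one]
        simp
      rw [h1, mul_one] at h
      exact h
    have hev := Metric.tendsto_nhds.mp hPΨ (η / 3) (by positivity)
    filter_upwards [hev] with ε hε
    calc dist (∫ y in B, Φ (π (F ε y)))
          (((volume B).toReal : ℂ) * ∫ u in Icc (0 : Fin n → ℝ) 1, Φ (π u))
        ≤ dist (∫ y in B, Φ (π (F ε y))) (∫ y in B, Ψ (π (F ε y)))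
          + dist (∫ y in B, Ψ (π (F ε y)))
            (((volume B).toReal : ℂ) * ∫ u in Icc (0 : Fin n → ℝ) 1, Ψ (π u))
          + dist (((volume B).toReal : ℂ) * ∫ u in Icc (0 : Fin n → ℝ) 1, Ψ (π u))
            (((volume B).toReal : ℂ) * ∫ u in Icc (0 : Fin n → ℝ) 1, Φ (π u)) :=
          dist_triangle4 _ _ _ _
      _ < η / 3 + η / 3 + η / 3 := by
          refine add_lt_add_of_lt_of_lt (add_lt_add_of_le_of_lt ?_ hε) ?_
          · exact ((hb1 ε).trans_lt hby).le
          · rw [dist_comm]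
            exact hb2.trans_lt hby
      _ = η := by ring
  -- conclude
  simp only [hPpdef] at hall
  have h1 : ∀ ε : ℝ, ∫ y in B, Φ (π (F ε y)) = ((∫ y in B, φ (F ε y) : ℝ) : ℂ) := by
    intro ε
    exact (integral_congr_ae (Filter.Eventually.of_forall fun y => hΦ0π (F ε y))).trans
      integral_ofReal
  have h2 : ∫ u in Icc (0 : Fin n → ℝ) 1, Φ (π u)
      = ((∫ u in Icc (0 : Fin n → ℝ) 1, φ u : ℝ) : ℂ) := by
    exact (integral_congr_ae (Filter.Eventually.of_forall fun u => hΦ0π u)).trans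
      integral_ofReal
  simp only [h1, h2] at hall
  have h3 : (((volume B).toReal : ℂ) * ((∫ u in Icc (0 : Fin n → ℝ) 1, φ u : ℝ) : ℂ))
      = (((volume B).toReal * ∫ u in Icc (0 : Fin n → ℝ) 1, φ u : ℝ) : ℂ) := by
    push_cast
    ring
  rw [h3] at hall
  have h4 := (Complex.continuous_re.tendsto _).comp hall
  have h5 : Filter.Tendsto (fun ε : ℝ => ∫ y in B, φ (F ε y)) (𝓝[>] 0)
      (𝓝 ((volume B).toReal * ∫ u in Icc (0 : Fin n → ℝ) 1, φ u)) := by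
    have heq : (fun ε : ℝ => (((∫ y in B, φ (F ε y) : ℝ) : ℂ)).re)
        = fun ε : ℝ => ∫ y in B, φ (F ε y) := by
      funext ε
      rw [Complex.ofReal_re]
    rw [Function.comp_def, heq, Complex.ofReal_re] at h4
    exact h4
  exact h5
end

section
/- Fix n ≥ 1, D ∈ GL_n(ℝ), Θ ∈ ℝⁿ, reals 0 < s < β, and a⁺, a⁻ ∈ ℝ; set 𝒜(p) := a⁺p₊^s + a⁻p₋^s (p₊ = max(p,0), p₋ = max(−p,0)). Let F : ℝⁿ → ℝ be C¹ with |F(u)| ≤ C₀(1+|u|)^{−(n+β)} and |∇F(u)| ≤ C₀(1+|u|)^{−(n+β+1)} for all u ∈ ℝⁿ, and assume additionally that F is uniformly a-Hölder continuous for some a ∈ (0,1], i.e. |F(u) − F(v)| ≤ C₀|u − v|^a for all u, v. Define Ψ(ŷ, p) := ∑_{j∈ℤⁿ} F(ŷ − Dj) 𝒜(Θ·Dj − p). Then for every c > 0 there is C > 0 such that |Ψ(ŷ + Δŷ, p) − Ψ(ŷ, p)| ≤ C |Δŷ|^a for all ŷ, p with |ŷ| ≤ c, |p| ≤ c and all Δŷ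 ∈ ℝⁿ with |Δŷ| ≤ 1. -/
open Matrix

lemma aux_sum_int {p : ℝ} (hp : 1 < p) :
    Summable fun m : ℤ => ((1:ℝ) + |(m:ℝ)|) ^ (-p) := by
  have h1 : Summable fun k : ℕ => ((1:ℝ) + (k:ℝ)) ^ (-p) := by
    have h0 : Summable fun k : ℕ => ((k:ℝ)) ^ (-p) :=
      Real.summable_nat_rpow.mpr (by linarith)
    have h2 := h0.comp_injective (add_left_injective 1)
    refine h2.congr fun k => ?_
    simp only [Function.comp_apply]
    push_cast
    ring_nf
  refine Summable.of_nat_of_neg (h1.congr fun k => ?_) (h1.congr fun k => ?_)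
  · rw [Int.cast_natCast, abs_of_nonneg (Nat.cast_nonneg k)]
  · rw [Int.cast_neg, abs_neg, Int.cast_natCast, abs_of_nonneg (Nat.cast_nonneg k)]

lemma aux_sum_prod (n : ℕ) {p : ℝ} (hp : 1 < p) :
    Summable fun j : Fin n → ℤ => ∏ i, ((1:ℝ) + |(j i:ℝ)|) ^ (-p) := by
  induction n with
  | zero => simp [Finset.univ_eq_empty]; exact summable_of_finite_support (Set.toFinite _)
  | succ n ih =>
      have h := (aux_sum_int hp).mul_of_nonneg ih
        (fun m => Real.rpow_nonneg (by positivity) _)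
        (fun j => Finset.prod_nonneg fun i _ => Real.rpow_nonneg (by positivity) _)
      have := h.comp_injective (Fin.consEquiv fun _ => ℤ).symm.injective
      refine this.congr fun j => ?_
      simp [Fin.consEquiv, Fin.prod_univ_succ, Fin.tail]

lemma aux_sum_lattice (n : ℕ) (hn : 1 ≤ n) {r : ℝ} (hr : (n:ℝ) < r) :
    Summable fun j : Fin n → ℤ =>
      ((1:ℝ) + ‖(fun i => (j i:ℝ) : Fin n → ℝ)‖) ^ (-r) := by
  have hn0 : (0:ℝ) < n := by exact_mod_cast hn
  have hp : 1 < r / n := (one_lt_div hn0).mpr hr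
  refine (aux_sum_prod n hp).of_nonneg_of_le
    (fun j => Real.rpow_nonneg (by positivity) _) (fun j => ?_)
  set x : Fin n → ℝ := fun i => (j i : ℝ) with hx
  have hb : (0:ℝ) < 1 + ‖x‖ := by positivity
  have hprod_pos : (0:ℝ) < ∏ i, (1 + |x i|) :=
    Finset.prod_pos fun i _ => by positivity
  have hle : ∏ i, ((1:ℝ) + |x i|) ≤ (1 + ‖x‖) ^ (n:ℕ) := by
    have hc : ((1:ℝ) + ‖x‖) ^ (n:ℕ) = ∏ _i : Fin n, ((1:ℝ) + ‖x‖) := by simp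
    rw [hc]
    refine Finset.prod_le_prod (fun i _ => by positivity) fun i _ => ?_
    have hk := norm_le_pi_norm x i
    simp only [Real.norm_eq_abs] at hk
    linarith
  have key : ((1:ℝ) + ‖x‖) ^ (-r) = (((1 + ‖x‖) ^ (n:ℕ)) : ℝ) ^ (-(r/n)) := by
    rw [← Real.rpow_natCast (1 + ‖x‖) n, ← Real.rpow_mul hb.le]
    congr 1
    field_simp
  rw [key]
  calc ((1 + ‖x‖) ^ (n:ℕ) : ℝ) ^ (-(r/n))
      ≤ (∏ i, ((1:ℝ) + |x i|)) ^ (-(r/n)) :=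
        Real.rpow_le_rpow_of_nonpos hprod_pos hle (neg_nonpos.mpr (by positivity))
    _ = ∏ i, ((1:ℝ) + |x i|) ^ (-(r/n)) :=
        (Real.finset_prod_rpow _ _ (fun i _ => by positivity) _).symm

lemma aux_rpow {b1 b2 K r : ℝ} (h2 : 0 < b2) (hK : 0 < K)
    (hle : b2 ≤ K * b1) (hr : 0 ≤ r) : b1 ^ (-r) ≤ K ^ r * b2 ^ (-r) := by
  have hdiv : 0 < b2 / K := div_pos h2 hK
  have h3 : b2 / K ≤ b1 := (div_le_iff₀' hK).mpr hle
  calc b1 ^ (-r) ≤ (b2 / K) ^ (-r) :=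
        Real.rpow_le_rpow_of_nonpos hdiv h3 (neg_nonpos.mpr hr)
    _ = K ^ r * b2 ^ (-r) := by
        rw [Real.div_rpow h2.le hK.le, Real.rpow_neg h2.le, Real.rpow_neg hK.le]
        have hKr : (0:ℝ) < K ^ r := Real.rpow_pos_of_pos hK r
        field_simp

lemma aux_mulVec {n : ℕ} (A : Matrix (Fin n) (Fin n) ℝ) (w : Fin n → ℝ) :
    ‖A.mulVec w‖ ≤ (∑ i, ∑ k, |A i k|) * ‖w‖ := by
  rw [pi_norm_le_iff_of_nonneg (by positivity)]
  intro i
  calc ‖A.mulVec w i‖ = |∑ k, A i k * w k| := rfl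
    _ ≤ ∑ k, |A i k * w k| := Finset.abs_sum_le_sum_abs _ _
    _ ≤ ∑ k, |A i k| * ‖w‖ := by
        refine Finset.sum_le_sum fun k _ => ?_
        rw [abs_mul]
        have hk : |w k| ≤ ‖w‖ := by
          have := norm_le_pi_norm w k
          simpa using this
        exact mul_le_mul_of_nonneg_left hk (abs_nonneg _)
    _ = (∑ k, |A i k|) * ‖w‖ := by rw [Finset.sum_mul]
    _ ≤ (∑ i, ∑ k, |A i k|) * ‖w‖ := by
        refine mul_le_mul_of_nonneg_right ?_ (norm_nonneg _)
        exact Finset.single_le_sum (f := fun i => ∑ k, |A i k|)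
          (fun i _ => Finset.sum_nonneg fun k _ => abs_nonneg _) (Finset.mem_univ i)

lemma aux_mvt {E : Type*} [NormedAddCommGroup E] [NormedSpace ℝ E]
    (F : E → ℝ) (hF : Differentiable ℝ F) {C₀ r : ℝ} (hC : 0 ≤ C₀) (hr : 0 ≤ r)
    (hFd' : ∀ x, ‖fderiv ℝ F x‖ ≤ C₀ * (1 + ‖x‖) ^ (-r))
    (u Δ : E) (hΔ : ‖Δ‖ ≤ 1) :
    |F (u + Δ) - F u| ≤ C₀ * 2 ^ r * (1 + ‖u‖) ^ (-r) * ‖Δ‖ := by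
  have hconv : Convex ℝ (Metric.closedBall u 1) := convex_closedBall u 1
  have hbound : ∀ x ∈ Metric.closedBall u 1,
      ‖fderiv ℝ F x‖ ≤ C₀ * 2 ^ r * (1 + ‖u‖) ^ (-r) := by
    intro x hx
    refine (hFd' x).trans ?_
    rw [mul_assoc]
    refine mul_le_mul_of_nonneg_left ?_ hC
    have hx' : ‖u - x‖ ≤ 1 := by
      rw [Metric.mem_closedBall, dist_eq_norm] at hx
      rw [norm_sub_rev]; exact hx
    have h1 : (1:ℝ) + ‖u‖ ≤ 2 * (1 + ‖x‖) := by
      have h2 : ‖u‖ ≤ ‖x‖ + 1 := by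
        have := (norm_sub_norm_le u x).trans hx'
        linarith
      linarith [norm_nonneg x]
    exact aux_rpow (by positivity) two_pos h1 hr
  have hmv := hconv.norm_image_sub_le_of_norm_fderiv_le
    (fun x _ => hF x) hbound (Metric.mem_closedBall_self zero_le_one)
    (show u + Δ ∈ Metric.closedBall u 1 by
      rw [Metric.mem_closedBall, dist_eq_norm]; simpa using hΔ)
  calc |F (u + Δ) - F u| = ‖F (u + Δ) - F u‖ := rfl
    _ ≤ C₀ * 2 ^ r * (1 + ‖u‖) ^ (-r) * ‖u + Δ - u‖ := hmv
    _ = C₀ * 2 ^ r * (1 + ‖u‖) ^ (-r) * ‖Δ‖ := by rw [add_sub_cancel_left]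

set_option maxHeartbeats 2000000 in
/-- first increment estimate of Lemma 8.1: with
`𝒜(p) = a⁺p₊^s + a⁻p₋^s`, a `C¹` kernel `F` with decay
`|F(u)| ≤ C₀(1+|u|)^{−(n+β)}`, `|∇F(u)| ≤ C₀(1+|u|)^{−(n+β+1)}`, uniformly
`a`-Hölder (`|F(u) − F(v)| ≤ C₀|u−v|^a`, `a ∈ (0,1]`), `0 < s < β`, and the
lattice sum `Ψ(ŷ,p) = ∑_{j∈ℤⁿ} F(ŷ − Dj)𝒜(Θ·Dj − p)`: for every `c > 0` there
is `C > 0` with `|Ψ(ŷ+Δŷ, p) − Ψ(ŷ,p)| ≤ C|Δŷ|^a` whenever `|ŷ| ≤ c`, `|p| ≤ c`,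
`|Δŷ| ≤ 1`. -/
theorem stmt_12 (n : ℕ) (hn : 1 ≤ n)
    (D : Matrix (Fin n) (Fin n) ℝ) (hD : IsUnit D.det)
    (Θ : Fin n → ℝ) (s β : ℝ) (hs : 0 < s) (hsβ : s < β)
    (ap am : ℝ) (F : (Fin n → ℝ) → ℝ) (C₀ : ℝ) (a : ℝ) (ha0 : 0 < a) (ha1 : a ≤ 1)
    (hF : ContDiff ℝ 1 F)
    (hFd : ∀ u : Fin n → ℝ, |F u| ≤ C₀ * (1 + ‖u‖) ^ (-((n : ℝ) + β)))
    (hFd' : ∀ u : Fin n → ℝ,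
      ‖fderiv ℝ F u‖ ≤ C₀ * (1 + ‖u‖) ^ (-((n : ℝ) + β + 1)))
    (hFh : ∀ u v : Fin n → ℝ, |F u - F v| ≤ C₀ * ‖u - v‖ ^ a)
    (Ψ : (Fin n → ℝ) → ℝ → ℝ)
    (hΨ : ∀ (yh : Fin n → ℝ) (p : ℝ), Ψ yh p =
      ∑' j : Fin n → ℤ,
        F (yh - D.mulVec fun i => (j i : ℝ)) *
          (ap * (max (Θ ⬝ᵥ D.mulVec (fun i => (j i : ℝ)) - p) 0) ^ s +
           am * (max (-(Θ ⬝ᵥ D.mulVec (fun i => (j i : ℝ)) - p)) 0) ^ s)) :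
    ∀ c : ℝ, 0 < c → ∃ C : ℝ, 0 < C ∧
      ∀ (yh Δyh : Fin n → ℝ) (p : ℝ), ‖yh‖ ≤ c → |p| ≤ c → ‖Δyh‖ ≤ 1 →
        |Ψ (yh + Δyh) p - Ψ yh p| ≤ C * ‖Δyh‖ ^ a := by
  intro c hc
  have hβ : 0 < β := hs.trans hsβ
  have hn0 : (0:ℝ) < n := by exact_mod_cast hn
  have hC0 : 0 ≤ C₀ := by
    have h := hFd 0
    have h0 : (0:ℝ) ≤ |F 0| := abs_nonneg _
    have hnorm0 : ‖(0 : Fin n → ℝ)‖ = 0 := norm_zero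
    rw [hnorm0, add_zero, Real.one_rpow] at h
    linarith
  -- constants
  set T : ℝ := ∑ i, |Θ i| with hTdef
  have hT0 : 0 ≤ T := Finset.sum_nonneg fun i _ => abs_nonneg _
  set KA : ℝ := (|ap| + |am|) * (T + c) ^ s with hKAdef
  have hKA0 : 0 ≤ KA := by positivity
  set KE : ℝ := ∑ i, ∑ k, |(D⁻¹) i k| with hKEdef
  have hKE0 : 0 ≤ KE := Finset.sum_nonneg fun i _ => Finset.sum_nonneg fun k _ => abs_nonneg _
  set M : ℝ := max 1 KE with hMdef
  have hM1 : (1:ℝ) ≤ M := le_max_left _ _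
  have hM0 : 0 < M := lt_of_lt_of_le one_pos hM1
  -- recovering the lattice point from its image
  have hMx : ∀ j : Fin n → ℤ,
      1 + ‖(fun i => (j i:ℝ) : Fin n → ℝ)‖ ≤ M * (1 + ‖D.mulVec (fun i => (j i:ℝ))‖) := by
    intro j
    have hxv : (fun i => (j i:ℝ) : Fin n → ℝ) = (D⁻¹).mulVec (D.mulVec fun i => (j i:ℝ)) := by
      rw [Matrix.mulVec_mulVec, Matrix.nonsing_inv_mul D hD, Matrix.one_mulVec]
    have h1 : ‖(fun i => (j i:ℝ) : Fin n → ℝ)‖ ≤ KE * ‖D.mulVec (fun i => (j i:ℝ))‖ := by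
      calc ‖(fun i => (j i:ℝ) : Fin n → ℝ)‖
          = ‖(D⁻¹).mulVec (D.mulVec fun i => (j i:ℝ))‖ := by rw [← hxv]
        _ ≤ KE * ‖D.mulVec (fun i => (j i:ℝ))‖ := aux_mulVec _ _
    have h2 : KE * ‖D.mulVec (fun i => (j i:ℝ))‖ ≤ M * ‖D.mulVec (fun i => (j i:ℝ))‖ :=
      mul_le_mul_of_nonneg_right (le_max_right _ _) (norm_nonneg _)
    nlinarith [norm_nonneg (D.mulVec (fun i => (j i:ℝ) : Fin n → ℝ))]
  -- the chain estimate
  have chain : ∀ r : ℝ, s ≤ r → ∀ w : Fin n → ℝ, ‖w‖ ≤ c + 1 → ∀ j : Fin n → ℤ,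
      (1 + ‖w - D.mulVec (fun i => (j i:ℝ))‖) ^ (-r) *
        (1 + ‖D.mulVec (fun i => (j i:ℝ))‖) ^ s ≤
      (2 + c) ^ r * M ^ (r - s) * (1 + ‖(fun i => (j i:ℝ) : Fin n → ℝ)‖) ^ (-(r - s)) := by
    intro r hsr w hw j
    have hr0 : 0 ≤ r := hs.le.trans hsr
    set vv : Fin n → ℝ := D.mulVec (fun i => (j i:ℝ)) with hvv
    set u : Fin n → ℝ := w - vv with hu
    have hvpos : (0:ℝ) < 1 + ‖vv‖ := by positivity
    have hupos : (0:ℝ) < 1 + ‖u‖ := by positivity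
    have h1 : 1 + ‖vv‖ ≤ (2 + c) * (1 + ‖u‖) := by
      have hwu : vv = w - u := by rw [hu]; abel
      have h3 : ‖vv‖ ≤ ‖w‖ + ‖u‖ := by rw [hwu]; exact norm_sub_le _ _
      nlinarith [norm_nonneg u]
    have step1 : (1 + ‖u‖) ^ (-r) ≤ (2 + c) ^ r * (1 + ‖vv‖) ^ (-r) :=
      aux_rpow hvpos (by linarith) h1 hr0
    have step2 : (1 + ‖u‖) ^ (-r) * (1 + ‖vv‖) ^ s ≤
        (2 + c) ^ r * (1 + ‖vv‖) ^ (-(r - s)) := by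
      have hmul := mul_le_mul_of_nonneg_right step1 (Real.rpow_nonneg hvpos.le s)
      calc (1 + ‖u‖) ^ (-r) * (1 + ‖vv‖) ^ s
          ≤ (2 + c) ^ r * (1 + ‖vv‖) ^ (-r) * (1 + ‖vv‖) ^ s := hmul
        _ = (2 + c) ^ r * (1 + ‖vv‖) ^ (-(r - s)) := by
            rw [mul_assoc, ← Real.rpow_add hvpos]
            ring_nf
    have step3 : (1 + ‖vv‖) ^ (-(r - s)) ≤
        M ^ (r - s) * (1 + ‖(fun i => (j i:ℝ) : Fin n → ℝ)‖) ^ (-(r - s)) :=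
      aux_rpow (by positivity) hM0 (hMx j) (by linarith)
    calc (1 + ‖u‖) ^ (-r) * (1 + ‖vv‖) ^ s
        ≤ (2 + c) ^ r * (1 + ‖vv‖) ^ (-(r - s)) := step2
      _ ≤ (2 + c) ^ r * (M ^ (r - s) * (1 + ‖(fun i => (j i:ℝ) : Fin n → ℝ)‖) ^ (-(r - s))) :=
          mul_le_mul_of_nonneg_left step3 (by positivity)
      _ = (2 + c) ^ r * M ^ (r - s) * (1 + ‖(fun i => (j i:ℝ) : Fin n → ℝ)‖) ^ (-(r - s)) := by
          ring
  -- bound on the A factor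
  have hAbound : ∀ (p : ℝ), |p| ≤ c → ∀ j : Fin n → ℤ,
      |ap * (max (Θ ⬝ᵥ D.mulVec (fun i => (j i:ℝ)) - p) 0) ^ s +
        am * (max (-(Θ ⬝ᵥ D.mulVec (fun i => (j i:ℝ)) - p)) 0) ^ s| ≤
      KA * (1 + ‖D.mulVec (fun i => (j i:ℝ))‖) ^ s := by
    intro p hp j
    set vv : Fin n → ℝ := D.mulVec (fun i => (j i:ℝ)) with hvv
    set q : ℝ := Θ ⬝ᵥ vv - p with hq
    have hdot : |Θ ⬝ᵥ vv| ≤ T * ‖vv‖ := by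
      calc |Θ ⬝ᵥ vv| = |∑ i, Θ i * vv i| := rfl
        _ ≤ ∑ i, |Θ i * vv i| := Finset.abs_sum_le_sum_abs _ _
        _ ≤ ∑ i, |Θ i| * ‖vv‖ := by
            refine Finset.sum_le_sum fun i _ => ?_
            rw [abs_mul]
            refine mul_le_mul_of_nonneg_left ?_ (abs_nonneg _)
            have := norm_le_pi_norm vv i
            simpa using this
        _ = T * ‖vv‖ := by rw [← Finset.sum_mul]
    have hqb : |q| ≤ (T + c) * (1 + ‖vv‖) := by
      have h1 : |q| ≤ |Θ ⬝ᵥ vv| + |p| := abs_sub _ _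
      nlinarith [norm_nonneg vv]
    have habs : (0:ℝ) ≤ |q| := abs_nonneg _
    have hbase : |q| ^ s ≤ (T + c) ^ s * (1 + ‖vv‖) ^ s := by
      calc |q| ^ s ≤ ((T + c) * (1 + ‖vv‖)) ^ s :=
            Real.rpow_le_rpow habs hqb hs.le
        _ = (T + c) ^ s * (1 + ‖vv‖) ^ s :=
            Real.mul_rpow (by positivity) (by positivity)
    have hm1 : (max q 0) ^ s ≤ (T + c) ^ s * (1 + ‖vv‖) ^ s :=
      le_trans (Real.rpow_le_rpow (le_max_right q 0)
        (max_le (le_abs_self q) habs) hs.le) hbase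
    have hm2 : (max (-q) 0) ^ s ≤ (T + c) ^ s * (1 + ‖vv‖) ^ s :=
      le_trans (Real.rpow_le_rpow (le_max_right (-q) 0)
        (max_le (neg_le_abs q) habs) hs.le) hbase
    have hm1n : (0:ℝ) ≤ (max q 0) ^ s := Real.rpow_nonneg (le_max_right q 0) s
    have hm2n : (0:ℝ) ≤ (max (-q) 0) ^ s := Real.rpow_nonneg (le_max_right (-q) 0) s
    calc |ap * (max q 0) ^ s + am * (max (-q) 0) ^ s|
        ≤ |ap * (max q 0) ^ s| + |am * (max (-q) 0) ^ s| := abs_add_le _ _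
      _ = |ap| * (max q 0) ^ s + |am| * (max (-q) 0) ^ s := by
          rw [abs_mul, abs_mul, abs_of_nonneg hm1n, abs_of_nonneg hm2n]
      _ ≤ |ap| * ((T + c) ^ s * (1 + ‖vv‖) ^ s) + |am| * ((T + c) ^ s * (1 + ‖vv‖) ^ s) :=
          add_le_add (mul_le_mul_of_nonneg_left hm1 (abs_nonneg _))
            (mul_le_mul_of_nonneg_left hm2 (abs_nonneg _))
      _ = KA * (1 + ‖vv‖) ^ s := by rw [hKAdef]; ring
  -- summable weights
  have hg : Summable fun j : Fin n → ℤ =>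
      ((1:ℝ) + ‖(fun i => (j i:ℝ) : Fin n → ℝ)‖) ^ (-((n:ℝ) + β + 1 - s)) :=
    aux_sum_lattice n hn (by linarith)
  have hg2 : Summable fun j : Fin n → ℤ =>
      ((1:ℝ) + ‖(fun i => (j i:ℝ) : Fin n → ℝ)‖) ^ (-((n:ℝ) + β - s)) :=
    aux_sum_lattice n hn (by linarith)
  -- summability of the defining series
  have hsummand : ∀ (w : Fin n → ℝ), ‖w‖ ≤ c + 1 → ∀ (p : ℝ), |p| ≤ c →
      Summable fun j : Fin n → ℤ =>
        F (w - D.mulVec fun i => (j i : ℝ)) *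
          (ap * (max (Θ ⬝ᵥ D.mulVec (fun i => (j i : ℝ)) - p) 0) ^ s +
           am * (max (-(Θ ⬝ᵥ D.mulVec (fun i => (j i : ℝ)) - p)) 0) ^ s) := by
    intro w hw p hp
    refine Summable.of_norm_bounded
      (g := fun j => C₀ * KA * ((2 + c) ^ ((n:ℝ) + β) * M ^ ((n:ℝ) + β - s)) *
        ((1:ℝ) + ‖(fun i => (j i:ℝ) : Fin n → ℝ)‖) ^ (-((n:ℝ) + β - s)))
      (hg2.mul_left _) (fun j => ?_)
    rw [Real.norm_eq_abs, abs_mul]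
    calc |F (w - D.mulVec fun i => (j i : ℝ))| *
        |ap * (max (Θ ⬝ᵥ D.mulVec (fun i => (j i : ℝ)) - p) 0) ^ s +
           am * (max (-(Θ ⬝ᵥ D.mulVec (fun i => (j i : ℝ)) - p)) 0) ^ s| ≤
        (C₀ * (1 + ‖w - D.mulVec fun i => (j i:ℝ)‖) ^ (-((n:ℝ) + β))) *
          (KA * (1 + ‖D.mulVec (fun i => (j i:ℝ))‖) ^ s) :=
          mul_le_mul (hFd _) (hAbound p hp j) (abs_nonneg _) (by positivity)
      _ = (C₀ * KA) * ((1 + ‖w - D.mulVec fun i => (j i:ℝ)‖) ^ (-((n:ℝ) + β)) *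
            (1 + ‖D.mulVec (fun i => (j i:ℝ))‖) ^ s) := by ring
      _ ≤ (C₀ * KA) * ((2 + c) ^ ((n:ℝ) + β) * M ^ ((n:ℝ) + β - s) *
            ((1:ℝ) + ‖(fun i => (j i:ℝ) : Fin n → ℝ)‖) ^ (-((n:ℝ) + β - s))) :=
          mul_le_mul_of_nonneg_left (chain ((n:ℝ) + β) (by linarith) w hw j) (by positivity)
      _ = C₀ * KA * ((2 + c) ^ ((n:ℝ) + β) * M ^ ((n:ℝ) + β - s)) *
            ((1:ℝ) + ‖(fun i => (j i:ℝ) : Fin n → ℝ)‖) ^ (-((n:ℝ) + β - s)) := by ring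
  -- final constant
  set Q : ℝ := C₀ * 2 ^ ((n:ℝ) + β + 1) * KA *
      ((2 + c) ^ ((n:ℝ) + β + 1) * M ^ ((n:ℝ) + β + 1 - s)) with hQdef
  have hQ0 : 0 ≤ Q := by positivity
  set G : ℝ := ∑' j : Fin n → ℤ,
      ((1:ℝ) + ‖(fun i => (j i:ℝ) : Fin n → ℝ)‖) ^ (-((n:ℝ) + β + 1 - s)) with hGdef
  have hG0 : 0 ≤ G := tsum_nonneg fun j => Real.rpow_nonneg (by positivity) _
  refine ⟨Q * G + 1, by positivity, ?_⟩
  intro yh Δyh p hy hp hΔ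
  rw [hΨ, hΨ]
  set f1 : (Fin n → ℤ) → ℝ := fun j =>
    F (yh + Δyh - D.mulVec fun i => (j i : ℝ)) *
      (ap * (max (Θ ⬝ᵥ D.mulVec (fun i => (j i : ℝ)) - p) 0) ^ s +
       am * (max (-(Θ ⬝ᵥ D.mulVec (fun i => (j i : ℝ)) - p)) 0) ^ s) with hf1
  set f2 : (Fin n → ℤ) → ℝ := fun j =>
    F (yh - D.mulVec fun i => (j i : ℝ)) *
      (ap * (max (Θ ⬝ᵥ D.mulVec (fun i => (j i : ℝ)) - p) 0) ^ s +
       am * (max (-(Θ ⬝ᵥ D.mulVec (fun i => (j i : ℝ)) - p)) 0) ^ s) with hf2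
  have hy1 : ‖yh + Δyh‖ ≤ c + 1 := le_trans (norm_add_le _ _) (by linarith)
  have hy2 : ‖yh‖ ≤ c + 1 := by linarith
  have hs1 : Summable f1 := hsummand (yh + Δyh) hy1 p hp
  have hs2 : Summable f2 := hsummand yh hy2 p hp
  -- per-term estimate on the difference
  have hΔa : ‖Δyh‖ ≤ ‖Δyh‖ ^ a := by
    rcases eq_or_lt_of_le (norm_nonneg Δyh) with h0 | h0
    · rw [← h0, Real.zero_rpow (ne_of_gt ha0)]
    · calc ‖Δyh‖ = ‖Δyh‖ ^ (1:ℝ) := (Real.rpow_one _).symm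
        _ ≤ ‖Δyh‖ ^ a := Real.rpow_le_rpow_of_exponent_ge h0 hΔ ha1
  have hterm : ∀ j : Fin n → ℤ, |f1 j - f2 j| ≤
      Q * ((1:ℝ) + ‖(fun i => (j i:ℝ) : Fin n → ℝ)‖) ^ (-((n:ℝ) + β + 1 - s)) * ‖Δyh‖ ^ a := by
    intro j
    have hfactor : f1 j - f2 j =
        (F (yh + Δyh - D.mulVec fun i => (j i : ℝ)) -
          F (yh - D.mulVec fun i => (j i : ℝ))) *
        (ap * (max (Θ ⬝ᵥ D.mulVec (fun i => (j i : ℝ)) - p) 0) ^ s +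
         am * (max (-(Θ ⬝ᵥ D.mulVec (fun i => (j i : ℝ)) - p)) 0) ^ s) := by
      rw [hf1, hf2]; ring
    have hrw : yh + Δyh - (D.mulVec fun i => (j i:ℝ)) =
        (yh - D.mulVec fun i => (j i:ℝ)) + Δyh := by
      rw [add_sub_right_comm]
    have hmvt := aux_mvt F (hF.differentiable one_ne_zero) hC0
      (r := (n:ℝ) + β + 1) (by positivity) hFd'
      (yh - D.mulVec fun i => (j i:ℝ)) Δyh hΔ
    rw [← hrw] at hmvt
    rw [hfactor, abs_mul]
    calc |F (yh + Δyh - D.mulVec fun i => (j i : ℝ)) -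
          F (yh - D.mulVec fun i => (j i : ℝ))| *
        |ap * (max (Θ ⬝ᵥ D.mulVec (fun i => (j i : ℝ)) - p) 0) ^ s +
         am * (max (-(Θ ⬝ᵥ D.mulVec (fun i => (j i : ℝ)) - p)) 0) ^ s|
        ≤ (C₀ * 2 ^ ((n:ℝ) + β + 1) *
            (1 + ‖yh - D.mulVec fun i => (j i:ℝ)‖) ^ (-((n:ℝ) + β + 1)) * ‖Δyh‖) *
          (KA * (1 + ‖D.mulVec (fun i => (j i:ℝ))‖) ^ s) :=
          mul_le_mul hmvt (hAbound p hp j) (abs_nonneg _) (by positivity)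
      _ = (C₀ * 2 ^ ((n:ℝ) + β + 1) * KA) *
            ((1 + ‖yh - D.mulVec fun i => (j i:ℝ)‖) ^ (-((n:ℝ) + β + 1)) *
              (1 + ‖D.mulVec (fun i => (j i:ℝ))‖) ^ s) * ‖Δyh‖ := by ring
      _ ≤ (C₀ * 2 ^ ((n:ℝ) + β + 1) * KA) *
            ((2 + c) ^ ((n:ℝ) + β + 1) * M ^ ((n:ℝ) + β + 1 - s) *
              ((1:ℝ) + ‖(fun i => (j i:ℝ) : Fin n → ℝ)‖) ^ (-((n:ℝ) + β + 1 - s))) * ‖Δyh‖ :=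
          mul_le_mul_of_nonneg_right
            (mul_le_mul_of_nonneg_left (chain ((n:ℝ) + β + 1) (by linarith) yh hy2 j)
              (by positivity)) (norm_nonneg _)
      _ ≤ (C₀ * 2 ^ ((n:ℝ) + β + 1) * KA) *
            ((2 + c) ^ ((n:ℝ) + β + 1) * M ^ ((n:ℝ) + β + 1 - s) *
              ((1:ℝ) + ‖(fun i => (j i:ℝ) : Fin n → ℝ)‖) ^ (-((n:ℝ) + β + 1 - s))) * ‖Δyh‖ ^ a :=
          mul_le_mul_of_nonneg_left hΔa (by positivity)
      _ = Q * ((1:ℝ) + ‖(fun i => (j i:ℝ) : Fin n → ℝ)‖) ^ (-((n:ℝ) + β + 1 - s)) * ‖Δyh‖ ^ a := by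
          rw [hQdef]; ring
  -- assemble
  rw [← Summable.tsum_sub hs1 hs2]
  have hbsum : Summable fun j : Fin n → ℤ =>
      Q * ((1:ℝ) + ‖(fun i => (j i:ℝ) : Fin n → ℝ)‖) ^ (-((n:ℝ) + β + 1 - s)) * ‖Δyh‖ ^ a :=
    (hg.mul_left Q).mul_right _
  have habssum : Summable fun j : Fin n → ℤ => |f1 j - f2 j| :=
    hbsum.of_nonneg_of_le (fun j => abs_nonneg _) hterm
  calc |∑' j : Fin n → ℤ, (f1 j - f2 j)|
      ≤ ∑' j : Fin n → ℤ, |f1 j - f2 j| := by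
        have habssum' : Summable fun j : Fin n → ℤ => ‖f1 j - f2 j‖ := by
          simpa [Real.norm_eq_abs] using habssum
        have hnt := norm_tsum_le_tsum_norm habssum'
        simpa [Real.norm_eq_abs] using hnt
    _ ≤ ∑' j : Fin n → ℤ,
        Q * ((1:ℝ) + ‖(fun i => (j i:ℝ) : Fin n → ℝ)‖) ^ (-((n:ℝ) + β + 1 - s)) * ‖Δyh‖ ^ a :=
        Summable.tsum_le_tsum hterm habssum hbsum
    _ = Q * ‖Δyh‖ ^ a * G := by
        rw [hGdef, ← tsum_mul_left]
        refine tsum_congr fun j => ?_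
        ring
    _ ≤ (Q * G + 1) * ‖Δyh‖ ^ a := by
        nlinarith [Real.rpow_nonneg (norm_nonneg Δyh) a]
end

section
/- Let n ≥ 1 be an integer and let 0 < s < β be reals. There exists a constant C > 0 such that for all ε ∈ (0,1): ∑_{j∈ℤⁿ, 0 < |j| ≤ 1/ε} (ε^{1/2} + ε|j|)^s |j|^{−(β+n−s)} ≤ C ε^{min(β−s, s/2)}. -/
open Finset

namespace Stmt13Aux

noncomputable def gsup (n : ℕ) (j : Fin n → ℤ) : ℕ :=
  Finset.univ.sup fun i => (j i).natAbs

lemma norm_eq {n : ℕ} (hn : 1 ≤ n) (j : Fin n → ℤ) :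
    ‖(fun i => (j i : ℝ) : Fin n → ℝ)‖ = (gsup n j : ℝ) := by
  have : Nonempty (Fin n) := ⟨⟨0, by omega⟩⟩
  obtain ⟨i0, -, hi0⟩ := Finset.exists_mem_eq_sup (univ : Finset (Fin n))
    Finset.univ_nonempty (fun i => (j i).natAbs)
  refine le_antisymm ?_ ?_
  · refine (pi_norm_le_iff_of_nonneg (by positivity)).2 fun i => ?_
    rw [Real.norm_eq_abs, ← Int.cast_abs, Int.abs_eq_natAbs]
    exact_mod_cast Nat.cast_le.2 (Finset.le_sup (f := fun i => (j i).natAbs) (Finset.mem_univ i))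
  · have h1 : (gsup n j : ℝ) = ‖((j i0 : ℝ))‖ := by
      rw [gsup, hi0, Real.norm_eq_abs]
      exact (Nat.cast_natAbs _).trans Int.cast_abs
    rw [h1]
    exact norm_le_pi_norm (fun i => (j i : ℝ)) i0

noncomputable def box (n k : ℕ) : Finset (Fin n → ℤ) :=
  Fintype.piFinset fun _ => Finset.Icc (-(k : ℤ)) (k : ℤ)

lemma mem_box {n k : ℕ} {j : Fin n → ℤ} : j ∈ box n k ↔ gsup n j ≤ k := by
  simp only [box, Fintype.mem_piFinset, Finset.mem_Icc, gsup, Finset.sup_le_iff,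
    Finset.mem_univ, true_implies]
  exact forall_congr' fun i => by omega

lemma card_box {n k : ℕ} : (box n k).card = (2 * k + 1) ^ n := by
  simp only [box, Fintype.card_piFinset, Int.card_Icc]
  have : ∀ F : Finset (Fin n), ∏ _i ∈ F, ((k:ℤ) + 1 - -(k:ℤ)).toNat = (2 * k + 1) ^ F.card := by
    intro F
    rw [Finset.prod_const]
    congr 1
    omega
  rw [this, Finset.card_univ, Fintype.card_fin]


lemma bernoulli_step {a : ℝ} (ha : 0 < a) (h1 : a ≤ 1) {k : ℕ} (hk1 : 1 ≤ k) :
    (k : ℝ) ^ (a - 1) ≤ (1 / a) * ((k : ℝ) ^ a - ((k - 1 : ℕ) : ℝ) ^ a) := by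
  have hx : (1 : ℝ) ≤ (k : ℝ) := by exact_mod_cast hk1
  have hx0 : (0 : ℝ) < k := by linarith
  have hcast : ((k - 1 : ℕ) : ℝ) = (k : ℝ) - 1 := by
    push_cast [Nat.cast_sub hk1]; ring
  have h₁ : ((k : ℝ) - 1) ^ a = (k : ℝ) ^ a * (1 + (-(1 / (k : ℝ)))) ^ a := by
    rw [← Real.mul_rpow hx0.le (by
      have : 1 / (k : ℝ) ≤ 1 := by
        rw [div_le_one hx0]; exact hx
      linarith)]
    congr 1
    field_simp
    ring
  have h₂ : (1 + (-(1 / (k : ℝ)))) ^ a ≤ 1 + a * (-(1 / (k : ℝ))) := by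
    refine rpow_one_add_le_one_add_mul_self ?_ ha.le h1
    have : 1 / (k : ℝ) ≤ 1 := by rw [div_le_one hx0]; exact hx
    linarith
  have h₃ : (k : ℝ) ^ a * (1 / (k : ℝ)) = (k : ℝ) ^ (a - 1) := by
    rw [Real.rpow_sub hx0, Real.rpow_one]
    ring
  have hb : ((k : ℝ) - 1) ^ a ≤ (k : ℝ) ^ a - a * (k : ℝ) ^ (a - 1) := by
    calc ((k : ℝ) - 1) ^ a = (k : ℝ) ^ a * (1 + (-(1 / (k : ℝ)))) ^ a := h₁
      _ ≤ (k : ℝ) ^ a * (1 + a * (-(1 / (k : ℝ)))) := by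
          exact mul_le_mul_of_nonneg_left h₂ (Real.rpow_nonneg hx0.le a)
      _ = (k : ℝ) ^ a - a * ((k : ℝ) ^ a * (1 / (k : ℝ))) := by ring
      _ = (k : ℝ) ^ a - a * (k : ℝ) ^ (a - 1) := by rw [h₃]
  rw [hcast, one_div_mul_eq_div, le_div_iff₀ ha]
  linarith

lemma sum_rpow_le {a : ℝ} (ha : 0 < a) (K : ℕ) :
    ∑ k ∈ Finset.Icc 1 K, (k : ℝ) ^ (a - 1) ≤ (1 + 1 / a) * (K : ℝ) ^ a := by
  have hKa : 0 ≤ (K : ℝ) ^ a := Real.rpow_nonneg (Nat.cast_nonneg K) a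
  rcases le_or_gt a 1 with h1 | h1
  · calc ∑ k ∈ Finset.Icc 1 K, (k : ℝ) ^ (a - 1)
        ≤ ∑ k ∈ Finset.Icc 1 K, (1 / a) * ((k : ℝ) ^ a - ((k - 1 : ℕ) : ℝ) ^ a) := by
          refine Finset.sum_le_sum fun k hk => ?_
          exact bernoulli_step ha h1 (Finset.mem_Icc.1 hk).1
      _ = (1 / a) * ∑ k ∈ Finset.Icc 1 K, ((k : ℝ) ^ a - ((k - 1 : ℕ) : ℝ) ^ a) := by
          rw [Finset.mul_sum]
      _ = (1 / a) * (K : ℝ) ^ a := by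
          congr 1
          rw [← Finset.Ico_add_one_right_eq_Icc, Finset.sum_Ico_eq_sum_range]
          have : ∀ i : ℕ, ((1 + i : ℕ) : ℝ) ^ a - ((1 + i - 1 : ℕ) : ℝ) ^ a
              = ((i + 1 : ℕ) : ℝ) ^ a - ((i : ℕ) : ℝ) ^ a := by
            intro i
            have e1 : 1 + i = i + 1 := by omega
            have e2 : 1 + i - 1 = i := by omega
            have e3 : i + 1 - 1 = i := by omega
            rw [e1, e3]
          rw [Finset.sum_congr rfl fun i _ => this i]
          rw [Finset.sum_range_sub (f := fun i : ℕ => ((i : ℕ) : ℝ) ^ a)]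
          simp [Real.zero_rpow ha.ne']
      _ ≤ (1 + 1 / a) * (K : ℝ) ^ a := by
          have h1a : 0 ≤ 1 / a := by positivity
          nlinarith
  · calc ∑ k ∈ Finset.Icc 1 K, (k : ℝ) ^ (a - 1)
        ≤ ∑ _k ∈ Finset.Icc 1 K, (K : ℝ) ^ (a - 1) := by
          refine Finset.sum_le_sum fun k hk => ?_
          obtain ⟨hk1, hk2⟩ := Finset.mem_Icc.1 hk
          exact Real.rpow_le_rpow (Nat.cast_nonneg k) (by exact_mod_cast hk2) (by linarith)
      _ = (K : ℝ) * (K : ℝ) ^ (a - 1) := by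
          rw [Finset.sum_const, Nat.card_Icc]
          simp [nsmul_eq_mul]
      _ ≤ (K : ℝ) ^ a := by
          rcases Nat.eq_zero_or_pos K with rfl | hK
          · simp only [Nat.cast_zero, zero_mul]
            exact Real.rpow_nonneg le_rfl a
          · have hK0 : (0 : ℝ) < K := by exact_mod_cast hK
            have : (K : ℝ) * (K : ℝ) ^ (a - 1) = (K : ℝ) ^ a := by
              nth_rewrite 1 [← Real.rpow_one (K : ℝ)]
              rw [← Real.rpow_add hK0]
              ring_nf
            rw [this]
      _ ≤ (1 + 1 / a) * (K : ℝ) ^ a := by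
          have h1a : 0 ≤ 1 / a := by positivity
          nlinarith


lemma shell_bound {n : ℕ} (hn : 1 ≤ n) {k : ℕ} (hk : 1 ≤ k) :
    (((2 * k + 1) ^ n - (2 * k - 1) ^ n : ℕ) : ℝ)
      ≤ 2 * n * 3 ^ (n - 1) * (k : ℝ) ^ (n - 1 : ℕ) := by
  have hk1 : (1 : ℝ) ≤ (k : ℝ) := by exact_mod_cast hk
  have hle : (2 * k - 1) ^ n ≤ (2 * k + 1) ^ n := Nat.pow_le_pow_left (by omega) n
  rw [Nat.cast_sub hle]
  have hx : ((((2 * k + 1) : ℕ) ^ n : ℕ) : ℝ) = (2 * (k : ℝ) + 1) ^ n := by push_cast; ring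
  have hy : ((((2 * k - 1) : ℕ) ^ n : ℕ) : ℝ) = (2 * (k : ℝ) - 1) ^ n := by
    push_cast [Nat.cast_sub (by omega : 1 ≤ 2 * k)]; ring
  rw [hx, hy]
  set x : ℝ := 2 * (k : ℝ) + 1 with hxdef
  set y : ℝ := 2 * (k : ℝ) - 1 with hydef
  have hy0 : 0 ≤ y := by rw [hydef]; linarith
  have hyx : y ≤ x := by rw [hxdef, hydef]; linarith
  have hx0 : 0 ≤ x := le_trans hy0 hyx
  have hgeom : x ^ n - y ^ n = (∑ i ∈ Finset.range n, x ^ i * y ^ (n - 1 - i)) * (x - y) :=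
    (geom_sum₂_mul x y n).symm
  have hsum : ∑ i ∈ Finset.range n, x ^ i * y ^ (n - 1 - i) ≤ (n : ℝ) * x ^ (n - 1) := by
    calc ∑ i ∈ Finset.range n, x ^ i * y ^ (n - 1 - i)
        ≤ ∑ _i ∈ Finset.range n, x ^ (n - 1) := by
          refine Finset.sum_le_sum fun i hi => ?_
          have hin : i ≤ n - 1 := by
            have := Finset.mem_range.1 hi; omega
          calc x ^ i * y ^ (n - 1 - i) ≤ x ^ i * x ^ (n - 1 - i) := by
                exact mul_le_mul_of_nonneg_left (pow_le_pow_left₀ hy0 hyx _) (pow_nonneg hx0 i)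
            _ = x ^ (n - 1) := by
                rw [← pow_add]
                congr 1
                omega
      _ = (n : ℝ) * x ^ (n - 1) := by
          rw [Finset.sum_const, Finset.card_range, nsmul_eq_mul]
  have hxy2 : x - y = 2 := by rw [hxdef, hydef]; ring
  have hx3 : x ≤ 3 * (k : ℝ) := by rw [hxdef]; linarith
  have hxpow : x ^ (n - 1) ≤ (3 * (k : ℝ)) ^ (n - 1) := pow_le_pow_left₀ hx0 hx3 _
  have hn0 : (0 : ℝ) ≤ n := Nat.cast_nonneg n
  calc x ^ n - y ^ n = (∑ i ∈ Finset.range n, x ^ i * y ^ (n - 1 - i)) * 2 := by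
        rw [hgeom, hxy2]
    _ ≤ ((n : ℝ) * x ^ (n - 1)) * 2 := by
        have := hsum; nlinarith
    _ ≤ ((n : ℝ) * (3 * (k : ℝ)) ^ (n - 1)) * 2 := by nlinarith
    _ = 2 * n * 3 ^ (n - 1) * (k : ℝ) ^ (n - 1 : ℕ) := by
        rw [mul_pow]
        ring

lemma term_bound {n : ℕ} (hn : 1 ≤ n) {s β ε : ℝ} (hs : 0 < s) (hε : 0 < ε)
    {k : ℕ} (hk : 1 ≤ k) :
    (k : ℝ) ^ (n - 1 : ℕ) * ((ε ^ ((1:ℝ)/2) + ε * k) ^ s * (k : ℝ) ^ (-(β + (n:ℝ) - s)))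
      ≤ 2 ^ s * (ε ^ (s/2) * (k : ℝ) ^ (s - β - 1) + ε ^ s * (k : ℝ) ^ (2*s - β - 1)) := by
  have hk0 : (0:ℝ) < k := by exact_mod_cast hk
  have hε2 : 0 ≤ ε ^ ((1:ℝ)/2) := Real.rpow_nonneg hε.le _
  have hsplit : (ε ^ ((1:ℝ)/2) + ε * k) ^ s ≤ 2 ^ s * (ε ^ (s/2) + ε ^ s * (k:ℝ) ^ s) := by
    have hmax : ε ^ ((1:ℝ)/2) + ε * k ≤ 2 * max (ε ^ ((1:ℝ)/2)) (ε * k) := by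
      have h1 := le_max_left (ε ^ ((1:ℝ)/2)) (ε * k)
      have h2 := le_max_right (ε ^ ((1:ℝ)/2)) (ε * k)
      linarith
    calc (ε ^ ((1:ℝ)/2) + ε * k) ^ s ≤ (2 * max (ε ^ ((1:ℝ)/2)) (ε * k)) ^ s := by
          refine Real.rpow_le_rpow (by positivity) hmax hs.le
      _ = 2 ^ s * (max (ε ^ ((1:ℝ)/2)) (ε * k)) ^ s :=
          Real.mul_rpow (by norm_num) (le_max_of_le_left hε2)
      _ ≤ 2 ^ s * (ε ^ (s/2) + ε ^ s * (k:ℝ) ^ s) := by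
          have h2s : (0:ℝ) ≤ 2 ^ s := Real.rpow_nonneg (by norm_num) s
          refine mul_le_mul_of_nonneg_left ?_ h2s
          have hterm1 : (ε ^ ((1:ℝ)/2)) ^ s = ε ^ (s/2) := by
            rw [← Real.rpow_mul hε.le]
            congr 1
            ring
          have hterm2 : (ε * (k:ℝ)) ^ s = ε ^ s * (k:ℝ) ^ s := Real.mul_rpow hε.le hk0.le
          have hnn1 : 0 ≤ ε ^ (s/2) := Real.rpow_nonneg hε.le _
          have hnn2 : 0 ≤ ε ^ s * (k:ℝ) ^ s := by
            have := Real.rpow_nonneg hε.le s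
            have := Real.rpow_nonneg hk0.le s
            positivity
          rcases max_cases (ε ^ ((1:ℝ)/2)) (ε * k) with ⟨hmx, -⟩ | ⟨hmx, -⟩
          · rw [hmx, hterm1]; linarith
          · rw [hmx, hterm2]; linarith
  have hcast : (k : ℝ) ^ (n - 1 : ℕ) = (k:ℝ) ^ ((n:ℝ) - 1) := by
    rw [← Real.rpow_natCast (k:ℝ) (n-1)]
    congr 1
    push_cast [Nat.cast_sub hn]
    ring
  have e1 : (k:ℝ) ^ ((n:ℝ) - 1) * (k:ℝ) ^ (-(β + (n:ℝ) - s)) = (k:ℝ) ^ (s - β - 1) := by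
    rw [← Real.rpow_add hk0]
    congr 1
    ring
  have e2 : (k:ℝ) ^ s * (k:ℝ) ^ (s - β - 1) = (k:ℝ) ^ (2*s - β - 1) := by
    rw [← Real.rpow_add hk0]
    congr 1
    ring
  calc (k : ℝ) ^ (n - 1 : ℕ) * ((ε ^ ((1:ℝ)/2) + ε * k) ^ s * (k : ℝ) ^ (-(β + (n:ℝ) - s)))
      ≤ (k : ℝ) ^ (n - 1 : ℕ) *
          ((2 ^ s * (ε ^ (s/2) + ε ^ s * (k:ℝ) ^ s)) * (k : ℝ) ^ (-(β + (n:ℝ) - s))) := by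
        have hknn : 0 ≤ (k : ℝ) ^ (n - 1 : ℕ) := by positivity
        have hkr : 0 ≤ (k:ℝ) ^ (-(β + (n:ℝ) - s)) := Real.rpow_nonneg hk0.le _
        exact mul_le_mul_of_nonneg_left (mul_le_mul_of_nonneg_right hsplit hkr) hknn
    _ = 2 ^ s * (ε ^ (s/2) * (k : ℝ) ^ (s - β - 1) + ε ^ s * (k : ℝ) ^ (2*s - β - 1)) := by
        rw [hcast, ← e2, ← e1]
        ring

end Stmt13Aux




/-- lattice-sum estimate (B.9)–(B.10): for `0 < s < β` there is
`C > 0` such that for all `ε ∈ (0,1)`,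
`∑_{j∈ℤⁿ, 0<|j|≤1/ε} (ε^{1/2} + ε|j|)^s |j|^{−(β+n−s)} ≤ C ε^{min(β−s, s/2)}`. -/
theorem stmt_13 (n : ℕ) (hn : 1 ≤ n) (s β : ℝ) (hs : 0 < s) (hsβ : s < β) :
    ∃ C : ℝ, 0 < C ∧ ∀ ε : ℝ, 0 < ε → ε < 1 →
      (∑' j : Fin n → ℤ,
        if 0 < ‖(fun i => (j i : ℝ) : Fin n → ℝ)‖ ∧
            ‖(fun i => (j i : ℝ) : Fin n → ℝ)‖ ≤ 1 / ε then
          (ε ^ ((1 : ℝ) / 2) + ε * ‖(fun i => (j i : ℝ) : Fin n → ℝ)‖) ^ s *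
            ‖(fun i => (j i : ℝ) : Fin n → ℝ)‖ ^ (-(β + (n : ℝ) - s))
        else 0)
      ≤ C * ε ^ min (β - s) (s / 2) := by
  classical
  set m := min (β - s) (s / 2) with hmdef
  have hm1 : m ≤ β - s := min_le_left _ _
  have hm2 : m ≤ s / 2 := min_le_right _ _
  have hm0 : 0 < m := lt_min (by linarith) (by linarith)
  have ha : 0 < s - m := by linarith
  have hsum : Summable (fun k : ℕ => (k : ℝ) ^ (s - β - 1)) :=
    Real.summable_nat_rpow.2 (by linarith)
  set C₁ := ∑' k : ℕ, (k : ℝ) ^ (s - β - 1) with hC₁def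
  have hC₁0 : 0 ≤ C₁ :=
    tsum_nonneg fun k => Real.rpow_nonneg (Nat.cast_nonneg k) _
  have hn1 : (1:ℝ) ≤ (n:ℝ) := by exact_mod_cast hn
  set D : ℝ := 2 * n * 3 ^ (n - 1) with hDdef
  have hD0 : 0 < D := by
    have h3 : (0:ℝ) < 3 ^ (n-1) := by positivity
    nlinarith
  have h2s : (0:ℝ) < 2 ^ s := Real.rpow_pos_of_pos (by norm_num) s
  have hCpos : 0 < D * 2 ^ s * (C₁ + 2 + 1 / (s - m)) := by
    have : 0 < 1 / (s - m) := by positivity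
    have : 0 < C₁ + 2 + 1 / (s - m) := by linarith
    positivity
  refine ⟨D * 2 ^ s * (C₁ + 2 + 1 / (s - m)), hCpos, fun ε hε hε1 => ?_⟩
  set K := ⌊1 / ε⌋₊ with hKdef
  have h1ε : (1:ℝ) ≤ 1 / ε := by rw [le_div_iff₀ hε]; linarith
  have hK1 : 1 ≤ K := Nat.le_floor (by exact_mod_cast h1ε)
  have hKε : (K : ℝ) ≤ 1 / ε := Nat.floor_le (by positivity)
  have hKε2 : 1 / ε < (K:ℝ) + 1 := by exact_mod_cast Nat.lt_floor_add_one (1/ε)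
  set F : ℕ → ℝ := fun k =>
    if 0 < (k:ℝ) ∧ (k:ℝ) ≤ 1 / ε then
      (ε ^ ((1:ℝ)/2) + ε * k) ^ s * (k:ℝ) ^ (-(β + (n:ℝ) - s)) else 0 with hFdef
  have hF0 : ∀ k : ℕ, 0 ≤ F k := by
    intro k
    rw [hFdef]
    dsimp only
    split
    · have h1 : 0 ≤ (ε ^ ((1:ℝ)/2) + ε * k) := by positivity
      exact mul_nonneg (Real.rpow_nonneg h1 s) (Real.rpow_nonneg (Nat.cast_nonneg k) _)
    · exact le_refl 0
  have hFj : ∀ j : Fin n → ℤ,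
      (if 0 < ‖(fun i => (j i : ℝ) : Fin n → ℝ)‖ ∧
            ‖(fun i => (j i : ℝ) : Fin n → ℝ)‖ ≤ 1 / ε then
          (ε ^ ((1 : ℝ) / 2) + ε * ‖(fun i => (j i : ℝ) : Fin n → ℝ)‖) ^ s *
            ‖(fun i => (j i : ℝ) : Fin n → ℝ)‖ ^ (-(β + (n : ℝ) - s))
        else 0) = F (Stmt13Aux.gsup n j) := by
    intro j
    rw [Stmt13Aux.norm_eq hn j, hFdef]
  have hzero : ∀ j : Fin n → ℤ, j ∉ Stmt13Aux.box n K → F (Stmt13Aux.gsup n j) = 0 := by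
    intro j hj
    rw [hFdef]
    dsimp only
    rw [if_neg]
    rintro ⟨-, hle⟩
    have hgt : K < Stmt13Aux.gsup n j := by
      by_contra h
      exact hj (Stmt13Aux.mem_box.2 (by omega))
    have : (K:ℝ) + 1 ≤ (Stmt13Aux.gsup n j : ℝ) := by exact_mod_cast hgt
    linarith
  have hmaps : ∀ j ∈ Stmt13Aux.box n K, Stmt13Aux.gsup n j ∈ Finset.range (K+1) := by
    intro j hj
    exact Finset.mem_range.2 (by have := Stmt13Aux.mem_box.1 hj; omega)
  have key : ∀ k ∈ Finset.range (K+1),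
      ((Stmt13Aux.box n K).filter (fun j => Stmt13Aux.gsup n j = k)).card • F k
        ≤ D * 2 ^ s * (ε ^ (s/2) * (k:ℝ) ^ (s - β - 1) + ε ^ s * (k:ℝ) ^ (2*s - β - 1)) := by
    intro k hk
    have hRHSnn : 0 ≤ ε ^ (s/2) * (k:ℝ) ^ (s - β - 1) + ε ^ s * (k:ℝ) ^ (2*s - β - 1) := by
      have := Real.rpow_nonneg hε.le (s/2)
      have := Real.rpow_nonneg (Nat.cast_nonneg k) (s - β - 1)
      have := Real.rpow_nonneg hε.le s
      have := Real.rpow_nonneg (Nat.cast_nonneg k) (2*s - β - 1)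
      positivity
    rcases Nat.eq_zero_or_pos k with rfl | hk1
    · have : F 0 = 0 := by
        rw [hFdef]
        dsimp only
        rw [if_neg]
        rintro ⟨h0, -⟩
        simp at h0
      rw [this, smul_zero]
      exact mul_nonneg (mul_nonneg hD0.le h2s.le) hRHSnn
    · have hkcast : (0:ℝ) < (k:ℝ) := by exact_mod_cast hk1
      have hkK : (k:ℝ) ≤ 1 / ε := by
        have : k ≤ K := by have := Finset.mem_range.1 hk; omega
        have : (k:ℝ) ≤ (K:ℝ) := by exact_mod_cast this
        linarith
      have hFk : F k = (ε ^ ((1:ℝ)/2) + ε * k) ^ s * (k:ℝ) ^ (-(β + (n:ℝ) - s)) := by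
        rw [hFdef]
        dsimp only
        rw [if_pos ⟨hkcast, hkK⟩]
      -- cardinality bound
      have hsubset : (Stmt13Aux.box n K).filter (fun j => Stmt13Aux.gsup n j = k) ⊆ Stmt13Aux.box n k \ Stmt13Aux.box n (k-1) := by
        intro j hj
        obtain ⟨-, hgj⟩ := Finset.mem_filter.1 hj
        refine Finset.mem_sdiff.2 ⟨Stmt13Aux.mem_box.2 (le_of_eq hgj), fun hmem => ?_⟩
        have := Stmt13Aux.mem_box.1 hmem
        omega
      have hsub2 : Stmt13Aux.box n (k-1) ⊆ Stmt13Aux.box n k := by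
        intro j hj
        exact Stmt13Aux.mem_box.2 (le_trans (Stmt13Aux.mem_box.1 hj) (by omega))
      have hcard : ((Stmt13Aux.box n K).filter (fun j => Stmt13Aux.gsup n j = k)).card
          ≤ (2*k+1)^n - (2*k-1)^n := by
        calc ((Stmt13Aux.box n K).filter (fun j => Stmt13Aux.gsup n j = k)).card
            ≤ (Stmt13Aux.box n k \ Stmt13Aux.box n (k-1)).card := Finset.card_le_card hsubset
          _ = (Stmt13Aux.box n k).card - (Stmt13Aux.box n (k-1)).card := Finset.card_sdiff_of_subset hsub2
          _ = (2*k+1)^n - (2*k-1)^n := by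
              rw [Stmt13Aux.card_box, Stmt13Aux.card_box]
              congr 2
              omega
      have hcardR : (((Stmt13Aux.box n K).filter (fun j => Stmt13Aux.gsup n j = k)).card : ℝ)
          ≤ D * (k:ℝ) ^ (n - 1 : ℕ) := by
        calc (((Stmt13Aux.box n K).filter (fun j => Stmt13Aux.gsup n j = k)).card : ℝ)
            ≤ (((2*k+1)^n - (2*k-1)^n : ℕ) : ℝ) := by exact_mod_cast hcard
          _ ≤ D * (k:ℝ) ^ (n - 1 : ℕ) := by rw [hDdef]; exact Stmt13Aux.shell_bound hn hk1
      calc ((Stmt13Aux.box n K).filter (fun j => Stmt13Aux.gsup n j = k)).card • F k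
          = (((Stmt13Aux.box n K).filter (fun j => Stmt13Aux.gsup n j = k)).card : ℝ) * F k := by
            rw [nsmul_eq_mul]
        _ ≤ (D * (k:ℝ) ^ (n - 1 : ℕ)) * F k := mul_le_mul_of_nonneg_right hcardR (hF0 k)
        _ = D * ((k:ℝ) ^ (n - 1 : ℕ) * F k) := by ring
        _ ≤ D * (2 ^ s * (ε ^ (s/2) * (k:ℝ) ^ (s - β - 1) + ε ^ s * (k:ℝ) ^ (2*s - β - 1))) := by
            refine mul_le_mul_of_nonneg_left ?_ hD0.le
            rw [hFk]
            exact Stmt13Aux.term_bound hn hs hε hk1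
        _ = D * 2 ^ s * (ε ^ (s/2) * (k:ℝ) ^ (s - β - 1) + ε ^ s * (k:ℝ) ^ (2*s - β - 1)) := by
            ring
  -- sum bounds
  have hA : ∑ k ∈ Finset.range (K+1), (k:ℝ) ^ (s - β - 1) ≤ C₁ := by
    rw [hC₁def]
    exact Summable.sum_le_tsum _ (fun i _ => Real.rpow_nonneg (Nat.cast_nonneg i) _) hsum
  have hB : ∑ k ∈ Finset.range (K+1), (k:ℝ) ^ (2*s - β - 1)
      ≤ 1 + (1 + 1/(s-m)) * (K:ℝ) ^ (s - m) := by
    rw [Finset.range_eq_Ico, Finset.sum_eq_sum_Ico_succ_bot (by omega : 0 < K + 1)]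
    simp only [zero_add]
    have h0 : ((0:ℕ):ℝ) ^ (2*s - β - 1) ≤ 1 := by
      rw [Nat.cast_zero]
      exact Real.zero_rpow_le_one _
    have hrest : ∑ k ∈ Finset.Ico 1 (K+1), (k:ℝ) ^ (2*s - β - 1)
        ≤ (1 + 1/(s-m)) * (K:ℝ) ^ (s - m) := by
      rw [Finset.Ico_add_one_right_eq_Icc]
      calc ∑ k ∈ Finset.Icc 1 K, (k:ℝ) ^ (2*s - β - 1)
          ≤ ∑ k ∈ Finset.Icc 1 K, (k:ℝ) ^ ((s - m) - 1) := by
            refine Finset.sum_le_sum fun k hk => ?_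
            have hk1 : (1:ℝ) ≤ (k:ℝ) := by exact_mod_cast (Finset.mem_Icc.1 hk).1
            exact Real.rpow_le_rpow_of_exponent_le hk1 (by linarith)
        _ ≤ (1 + 1/(s-m)) * (K:ℝ) ^ (s - m) := Stmt13Aux.sum_rpow_le ha K
    exact add_le_add h0 hrest
  -- final exponent estimates
  have hεs2 : ε ^ (s/2) ≤ ε ^ m := Real.rpow_le_rpow_of_exponent_ge hε hε1.le hm2
  have hKa1 : (1:ℝ) ≤ (K:ℝ) ^ (s - m) := by
    apply Real.one_le_rpow (by exact_mod_cast hK1) ha.le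
  have hKm : ε ^ s * (K:ℝ) ^ (s - m) ≤ ε ^ m := by
    have h1 : (K:ℝ) ^ (s - m) ≤ (1/ε) ^ (s - m) :=
      Real.rpow_le_rpow (Nat.cast_nonneg K) hKε ha.le
    have h2 : (1/ε) ^ (s - m) = ε ^ (-(s - m)) := by
      rw [one_div, Real.inv_rpow hε.le, ← Real.rpow_neg hε.le]
    have h3 : ε ^ s * ε ^ (-(s - m)) = ε ^ m := by
      rw [← Real.rpow_add hε]
      congr 1
      ring
    calc ε ^ s * (K:ℝ) ^ (s - m) ≤ ε ^ s * ε ^ (-(s - m)) := by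
          exact mul_le_mul_of_nonneg_left (h1.trans_eq h2) (Real.rpow_nonneg hε.le s)
      _ = ε ^ m := h3
  -- put everything together
  calc (∑' j : Fin n → ℤ,
        if 0 < ‖(fun i => (j i : ℝ) : Fin n → ℝ)‖ ∧
            ‖(fun i => (j i : ℝ) : Fin n → ℝ)‖ ≤ 1 / ε then
          (ε ^ ((1 : ℝ) / 2) + ε * ‖(fun i => (j i : ℝ) : Fin n → ℝ)‖) ^ s *
            ‖(fun i => (j i : ℝ) : Fin n → ℝ)‖ ^ (-(β + (n : ℝ) - s))
        else 0)
      = ∑' j : Fin n → ℤ, F (Stmt13Aux.gsup n j) := tsum_congr hFj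
    _ = ∑ j ∈ Stmt13Aux.box n K, F (Stmt13Aux.gsup n j) := tsum_eq_sum hzero
    _ = ∑ k ∈ Finset.range (K+1), ∑ j ∈ (Stmt13Aux.box n K).filter (fun j => Stmt13Aux.gsup n j = k), F (Stmt13Aux.gsup n j) :=
        (Finset.sum_fiberwise_of_maps_to hmaps _).symm
    _ = ∑ k ∈ Finset.range (K+1), ((Stmt13Aux.box n K).filter (fun j => Stmt13Aux.gsup n j = k)).card • F k := by
        refine Finset.sum_congr rfl fun k hk => ?_
        rw [Finset.sum_congr rfl (fun j hj => by rw [(Finset.mem_filter.1 hj).2]),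
          Finset.sum_const]
    _ ≤ ∑ k ∈ Finset.range (K+1),
          D * 2 ^ s * (ε ^ (s/2) * (k:ℝ) ^ (s - β - 1) + ε ^ s * (k:ℝ) ^ (2*s - β - 1)) :=
        Finset.sum_le_sum key
    _ = D * 2 ^ s * (ε ^ (s/2) * ∑ k ∈ Finset.range (K+1), (k:ℝ) ^ (s - β - 1)
          + ε ^ s * ∑ k ∈ Finset.range (K+1), (k:ℝ) ^ (2*s - β - 1)) := by
        rw [← Finset.mul_sum, Finset.sum_add_distrib, ← Finset.mul_sum, ← Finset.mul_sum]
    _ ≤ D * 2 ^ s * (C₁ + 2 + 1 / (s - m)) * ε ^ m := by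
        have hεs2nn : 0 ≤ ε ^ (s/2) := Real.rpow_nonneg hε.le _
        have hεsnn : 0 ≤ ε ^ s := Real.rpow_nonneg hε.le _
        have hεmnn : 0 ≤ ε ^ m := Real.rpow_nonneg hε.le _
        have h1a : 0 ≤ 1/(s-m) := by positivity
        have step1 : ε ^ (s/2) * ∑ k ∈ Finset.range (K+1), (k:ℝ) ^ (s - β - 1) ≤ C₁ * ε ^ m := by
          calc ε ^ (s/2) * ∑ k ∈ Finset.range (K+1), (k:ℝ) ^ (s - β - 1)
              ≤ ε ^ (s/2) * C₁ := mul_le_mul_of_nonneg_left hA hεs2nn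
            _ ≤ ε ^ m * C₁ := mul_le_mul_of_nonneg_right hεs2 hC₁0
            _ = C₁ * ε ^ m := by ring
        have step2 : ε ^ s * ∑ k ∈ Finset.range (K+1), (k:ℝ) ^ (2*s - β - 1)
            ≤ (2 + 1/(s-m)) * ε ^ m := by
          have hsumnn : (0:ℝ) ≤ ∑ k ∈ Finset.range (K+1), (k:ℝ) ^ (2*s - β - 1) :=
            Finset.sum_nonneg fun k _ => Real.rpow_nonneg (Nat.cast_nonneg k) _
          calc ε ^ s * ∑ k ∈ Finset.range (K+1), (k:ℝ) ^ (2*s - β - 1)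
              ≤ ε ^ s * (1 + (1 + 1/(s-m)) * (K:ℝ) ^ (s - m)) :=
                mul_le_mul_of_nonneg_left hB hεsnn
            _ ≤ ε ^ s * ((2 + 1/(s-m)) * (K:ℝ) ^ (s - m)) := by
                refine mul_le_mul_of_nonneg_left ?_ hεsnn
                nlinarith
            _ = (2 + 1/(s-m)) * (ε ^ s * (K:ℝ) ^ (s - m)) := by ring
            _ ≤ (2 + 1/(s-m)) * ε ^ m := by
                refine mul_le_mul_of_nonneg_left hKm (by linarith)
        calc D * 2 ^ s * (ε ^ (s/2) * ∑ k ∈ Finset.range (K+1), (k:ℝ) ^ (s - β - 1)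
              + ε ^ s * ∑ k ∈ Finset.range (K+1), (k:ℝ) ^ (2*s - β - 1))
            ≤ D * 2 ^ s * (C₁ * ε ^ m + (2 + 1/(s-m)) * ε ^ m) := by
              refine mul_le_mul_of_nonneg_left ?_ (by positivity)
              linarith
          _ = D * 2 ^ s * (C₁ + 2 + 1 / (s - m)) * ε ^ m := by ring
end

section
/- Let ν ∈ (0,1], let k be a positive integer, set β := k − ν, and let 0 < s < k. Then for all κ, c₁, C₀ > 0 there exists C > 0 such that for every ε ∈ (0, 1/2) and every P ∈ ℝ with |P| ≤ c₁ε: ∫_{κε ≤ |p| ≤ C₀} |p|^{s−k} |P − p|^{ν−1} dp ≤ C ε^{s−β} if β > s; ≤ C log(1/ε) if β = s; ≤ C if β < s. (When ν = 1 the factor |P−p|^{ν−1} is 1.) -/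
open MeasureTheory

open Set intervalIntegral

lemma stmt15_ball (ν : ℝ) (hν1 : 0 < ν) (hν2 : ν ≤ 1) (r : ℝ) (hr : 0 ≤ r) :
    IntervalIntegrable (fun u : ℝ => |u| ^ (ν - 1)) volume (-r) r ∧
    ∫ u in (-r)..r, |u| ^ (ν - 1) = 2 * (r ^ ν / ν) := by
  have hmem : -1 < ν - 1 := by linarith
  have h0r : IntervalIntegrable (fun u : ℝ => |u| ^ (ν - 1)) volume 0 r := by
    rw [intervalIntegrable_iff_integrableOn_Icc_of_le hr]
    refine ((intervalIntegrable_iff_integrableOn_Icc_of_le hr).mp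
      (intervalIntegral.intervalIntegrable_rpow' hmem)).congr_fun ?_ measurableSet_Icc
    intro x hx
    simp only [abs_of_nonneg hx.1]
  have hneg : IntervalIntegrable (fun u : ℝ => |u| ^ (ν - 1)) volume (-r) 0 := by
    have := ((IntervalIntegrable.iff_comp_neg).mp h0r)
    simpa [abs_neg] using this.symm
  constructor
  · exact hneg.trans h0r
  · have hsplit := intervalIntegral.integral_add_adjacent_intervals hneg h0r
    have hval : ∫ u in (0:ℝ)..r, |u| ^ (ν - 1) = r ^ ν / ν := by
      rw [intervalIntegral.integral_congr (g := fun u : ℝ => u ^ (ν - 1))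
        (fun x hx => by
          rw [uIcc_of_le hr] at hx
          simp only [abs_of_nonneg hx.1]),
        integral_rpow (Or.inl hmem)]
      rw [Real.zero_rpow (by linarith : ν - 1 + 1 ≠ 0)]
      ring_nf
    have hnegval : ∫ u in (-r)..(0:ℝ), |u| ^ (ν - 1) = r ^ ν / ν := by
      have := intervalIntegral.integral_comp_neg (a := 0) (b := r)
        (fun u : ℝ => |u| ^ (ν - 1))
      simp only [abs_neg, neg_zero] at this
      rw [← this, hval]
    rw [← hsplit, hval, hnegval]; ring


lemma stmt15_annulus (e a b : ℝ) (ha : 0 < a) (hab : a ≤ b) :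
    IntegrableOn (fun p : ℝ => |p| ^ e) {p : ℝ | a ≤ |p| ∧ |p| ≤ b} ∧
    ∫ p in {p : ℝ | a ≤ |p| ∧ |p| ≤ b}, |p| ^ e = 2 * ∫ t in a..b, t ^ e := by
  have hset : {p : ℝ | a ≤ |p| ∧ |p| ≤ b} = Icc (-b) (-a) ∪ Icc a b := by
    ext p
    simp only [mem_setOf_eq, mem_union, mem_Icc]
    constructor
    · rintro ⟨h1, h2⟩
      rcases le_abs.mp h1 with h | h
      · right; exact ⟨h, (abs_le.mp h2).2⟩
      · left; exact ⟨(abs_le.mp h2).1, by linarith⟩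
    · rintro (⟨h1, h2⟩ | ⟨h1, h2⟩)
      · constructor
        · rw [abs_of_nonpos (by linarith)]; linarith
        · rw [abs_of_nonpos (by linarith)]; linarith
      · constructor
        · rw [abs_of_nonneg (by linarith)]; linarith
        · rw [abs_of_nonneg (by linarith)]; linarith
  have hcontR : IntegrableOn (fun p : ℝ => |p| ^ e) (Icc a b) := by
    apply ContinuousOn.integrableOn_Icc
    apply ContinuousOn.rpow_const continuous_abs.continuousOn
    intro x hx
    left
    simp only [ne_eq, abs_eq_zero]
    intro h; rw [h] at hx; exact absurd hx.1 (by linarith)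
  have hcontL : IntegrableOn (fun p : ℝ => |p| ^ e) (Icc (-b) (-a)) := by
    apply ContinuousOn.integrableOn_Icc
    apply ContinuousOn.rpow_const continuous_abs.continuousOn
    intro x hx
    left
    simp only [ne_eq, abs_eq_zero]
    intro h; rw [h] at hx; exact absurd hx.2 (by linarith)
  have hdisj : Disjoint (Icc (-b) (-a)) (Icc a b) := by
    refine Set.disjoint_left.mpr fun x hx hx' => ?_
    have := hx.2; have := hx'.1; linarith
  have hIccR : ∫ p in Icc a b, |p| ^ e = ∫ t in a..b, t ^ e := by
    rw [integral_Icc_eq_integral_Ioc, ← intervalIntegral.integral_of_le hab]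
    refine intervalIntegral.integral_congr fun x hx => ?_
    rw [uIcc_of_le hab] at hx
    simp only [abs_of_nonneg (le_trans ha.le hx.1)]
  have hIccL : ∫ p in Icc (-b) (-a), |p| ^ e = ∫ t in a..b, t ^ e := by
    rw [integral_Icc_eq_integral_Ioc, ← intervalIntegral.integral_of_le (by linarith : -b ≤ -a)]
    have := intervalIntegral.integral_comp_neg (a := a) (b := b) (fun u : ℝ => |u| ^ e)
    simp only [abs_neg] at this
    rw [← this]
    refine intervalIntegral.integral_congr fun x hx => ?_
    rw [uIcc_of_le hab] at hx
    simp only [abs_of_nonneg (le_trans ha.le hx.1)]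
  constructor
  · rw [hset]; exact hcontL.union hcontR
  · rw [hset, setIntegral_union hdisj measurableSet_Icc hcontL hcontR, hIccR, hIccL]; ring

lemma stmt15_core (ν : ℝ) (hν1 : 0 < ν) (hν2 : ν ≤ 1) (k : ℕ) (s : ℝ) (hsk : s < k)
    (κ c₁ C₀ : ℝ) (hκ : 0 < κ) (hc₁ : 0 < c₁) (hC₀ : 0 < C₀)
    (ε : ℝ) (hε : 0 < ε) (P : ℝ) (hP : |P| ≤ c₁ * ε) :
    ∫ p in {p : ℝ | κ * ε ≤ |p| ∧ |p| ≤ C₀}, |p| ^ (s - (k : ℝ)) * |P - p| ^ (ν - 1)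
      ≤ (κ ^ (s - (k : ℝ)) * (2 * ((3 * c₁) ^ ν / ν))) * ε ^ (s - (k : ℝ) + ν)
        + (2 ^ (1 - ν) * 2) * ∫ t in Set.Ioc (max κ (2 * c₁) * ε) C₀, t ^ (s - (k : ℝ) + ν - 1) := by
  set N := max κ (2 * c₁) with hNdef
  have hN : 0 < N := lt_of_lt_of_le hκ (le_max_left _ _)
  set r := 3 * c₁ * ε with hrdef
  have hr : 0 ≤ r := by positivity
  set f : ℝ → ℝ := fun p => |p| ^ (s - (k : ℝ)) * |P - p| ^ (ν - 1) with hfdef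
  set h₁ : ℝ → ℝ := fun p => (κ * ε) ^ (s - (k : ℝ)) * |P - p| ^ (ν - 1) with h₁def
  set h₂ : ℝ → ℝ := fun p => 2 ^ (1 - ν) * |p| ^ (s - (k : ℝ) + ν - 1) with h₂def
  set S : Set ℝ := {p : ℝ | κ * ε ≤ |p| ∧ |p| ≤ C₀} with hSdef
  set T₁ : Set ℝ := Icc (P - r) (P + r) with hT₁def
  set T₂ : Set ℝ := {p : ℝ | N * ε ≤ |p| ∧ |p| ≤ C₀} with hT₂def
  obtain ⟨hball_int, hball_val⟩ := stmt15_ball ν hν1 hν2 r hr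
  -- integrability on T₁
  have hcomp : IntervalIntegrable (fun x : ℝ => |P - x| ^ (ν - 1)) volume (P - r) (P + r) := by
    have := (hball_int.comp_sub_left P).symm
    simpa [sub_neg_eq_add] using this
  have hT₁int : IntegrableOn h₁ T₁ := by
    have h0 := (intervalIntegrable_iff_integrableOn_Icc_of_le (by linarith : P - r ≤ P + r)).mp hcomp
    exact h0.const_mul _
  have hT₁val : ∫ p in T₁, h₁ p = (κ * ε) ^ (s - (k : ℝ)) * (2 * (r ^ ν / ν)) := by
    rw [h₁def, MeasureTheory.integral_const_mul]
    congr 1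
    rw [hT₁def, integral_Icc_eq_integral_Ioc,
      ← intervalIntegral.integral_of_le (by linarith : P - r ≤ P + r)]
    have := intervalIntegral.integral_comp_sub_left (a := P - r) (b := P + r)
      (fun u : ℝ => |u| ^ (ν - 1)) P
    simp only [sub_sub_cancel, show P - (P + r) = -r by ring] at this
    rw [this, hball_val]
  -- measurability
  have hSmeas : MeasurableSet S := by
    rw [hSdef, Set.setOf_and]
    exact (measurableSet_le measurable_const continuous_abs.measurable).inter
      (measurableSet_le continuous_abs.measurable measurable_const)
  have hT₂meas : MeasurableSet T₂ := by
    rw [hT₂def, Set.setOf_and]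
    exact (measurableSet_le measurable_const continuous_abs.measurable).inter
      (measurableSet_le continuous_abs.measurable measurable_const)
  -- T₂ integral
  have hT₂ : IntegrableOn h₂ T₂ ∧
      ∫ p in T₂, h₂ p = (2 ^ (1 - ν) * 2) * ∫ t in Set.Ioc (N * ε) C₀, t ^ (s - (k : ℝ) + ν - 1) := by
    by_cases hbc : N * ε ≤ C₀
    · obtain ⟨hi, hv⟩ := stmt15_annulus (s - (k : ℝ) + ν - 1) (N * ε) C₀ (by positivity) hbc
      refine ⟨hi.const_mul _, ?_⟩
      rw [h₂def, MeasureTheory.integral_const_mul, hv, ← intervalIntegral.integral_of_le hbc]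
      ring
    · push_neg at hbc
      have hT₂empty : T₂ = ∅ := by
        rw [hT₂def]
        ext p
        simp only [mem_setOf_eq, mem_empty_iff_false, iff_false, not_and, not_le]
        intro h1; linarith
      have hIoc : Set.Ioc (N * ε) C₀ = ∅ := Set.Ioc_eq_empty (by linarith)
      rw [hT₂empty, hIoc]
      simp
  -- pointwise bound
  have hpt : ∀ p, S.indicator f p ≤ T₁.indicator h₁ p + T₂.indicator h₂ p := by
    intro p
    have hn1 : (0:ℝ) ≤ T₁.indicator h₁ p :=
      Set.indicator_nonneg (fun x _ => by rw [h₁def]; positivity) p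
    have hn2 : (0:ℝ) ≤ T₂.indicator h₂ p :=
      Set.indicator_nonneg (fun x _ => by rw [h₂def]; positivity) p
    by_cases hpS : p ∈ S
    · have hp1 := hpS.1
      have hp2 := hpS.2
      rw [Set.indicator_of_mem hpS]
      have habs : 0 < |p| := lt_of_lt_of_le (by positivity) hp1
      by_cases hsmall : |p| ≤ 2 * c₁ * ε
      · have hpT₁ : p ∈ T₁ := by
          have h3 : |P - p| ≤ r := le_trans (abs_sub P p) (by rw [hrdef]; linarith)
          have h4 := abs_le.mp h3
          constructor
          · linarith [h4.2]
          · linarith [h4.1]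
        have hb1 : f p ≤ h₁ p := by
          rw [hfdef, h₁def]
          exact mul_le_mul_of_nonneg_right
            (Real.rpow_le_rpow_of_nonpos (by positivity) hp1 (by push_cast; linarith))
            (Real.rpow_nonneg (abs_nonneg _) _)
        rw [Set.indicator_of_mem hpT₁]
        linarith
      · push_neg at hsmall
        have hpT₂ : p ∈ T₂ := by
          refine ⟨?_, hp2⟩
          rw [hNdef, max_mul_of_nonneg _ _ hε.le]
          exact max_le hp1 hsmall.le
        have hPp : |p| / 2 ≤ |P - p| := by
          have h5 : |p| - |P| ≤ |p - P| := abs_sub_abs_le_abs_sub p P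
          rw [abs_sub_comm] at h5
          linarith
        have hb2 : f p ≤ h₂ p := by
          have e1 : |P - p| ^ (ν - 1) ≤ (|p| / 2) ^ (ν - 1) :=
            Real.rpow_le_rpow_of_nonpos (by positivity) hPp (by linarith)
          have e2 : f p ≤ |p| ^ (s - (k : ℝ)) * (|p| / 2) ^ (ν - 1) := by
            rw [hfdef]
            exact mul_le_mul_of_nonneg_left e1 (Real.rpow_nonneg (abs_nonneg _) _)
          have e3 : |p| ^ (s - (k : ℝ)) * (|p| / 2) ^ (ν - 1) = h₂ p := by
            simp only [h₂def]
            rw [Real.div_rpow (abs_nonneg p) (by norm_num : (0:ℝ) ≤ 2),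
              show s - (k : ℝ) + ν - 1 = (s - (k : ℝ)) + (ν - 1) by ring,
              Real.rpow_add habs, show (1:ℝ) - ν = -(ν - 1) by ring,
              Real.rpow_neg (by norm_num : (0:ℝ) ≤ 2), div_eq_mul_inv]
            ring
          rw [← e3]; exact e2
        rw [Set.indicator_of_mem hpT₂]
        linarith
    · rw [Set.indicator_of_notMem hpS]
      linarith
  -- combine
  have hGint : Integrable (fun p => T₁.indicator h₁ p + T₂.indicator h₂ p) :=
    (hT₁int.integrable_indicator measurableSet_Icc).add (hT₂.1.integrable_indicator hT₂meas)
  calc ∫ p in S, f p = ∫ p, S.indicator f p := (MeasureTheory.integral_indicator hSmeas).symm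
    _ ≤ ∫ p, (T₁.indicator h₁ p + T₂.indicator h₂ p) := by
        refine integral_mono_of_nonneg (Filter.Eventually.of_forall fun p =>
          Set.indicator_nonneg (fun x _ => by rw [hfdef]; positivity) p) hGint
          (Filter.Eventually.of_forall hpt)
    _ = (∫ p in T₁, h₁ p) + ∫ p in T₂, h₂ p := by
        rw [integral_add (hT₁int.integrable_indicator measurableSet_Icc)
          (hT₂.1.integrable_indicator hT₂meas), MeasureTheory.integral_indicator measurableSet_Icc,
          MeasureTheory.integral_indicator hT₂meas, hT₁def]
    _ ≤ _ := by
        have heq : (κ * ε) ^ (s - (k : ℝ)) * (2 * (r ^ ν / ν))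
            = (κ ^ (s - (k : ℝ)) * (2 * ((3 * c₁) ^ ν / ν))) * ε ^ (s - (k : ℝ) + ν) := by
          rw [hrdef, Real.mul_rpow hκ.le hε.le, Real.mul_rpow (by positivity) hε.le,
            Real.rpow_add hε]
          ring
        exact add_le_add (le_of_eq (hT₁val.trans heq)) (le_of_eq hT₂.2)

/-- integral estimate (9.5): let `ν ∈ (0,1]`, `k ≥ 1`, `β = k − ν`,
`0 < s < k`. For all `κ, c₁, C₀ > 0` there is `C > 0` such that for all
`ε ∈ (0,1/2)` and `|P| ≤ c₁ε`:
`∫_{κε ≤ |p| ≤ C₀} |p|^{s−k} |P−p|^{ν−1} dp` is at most `Cε^{s−β}` if `β > s`,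
at most `C log(1/ε)` if `β = s`, at most `C` if `β < s`. -/
theorem stmt_15 (ν : ℝ) (hν1 : 0 < ν) (hν2 : ν ≤ 1) (k : ℕ) (hk : 1 ≤ k)
    (β s : ℝ) (hβ : β = k - ν) (hs1 : 0 < s) (hs2 : s < k)
    (κ c₁ C₀ : ℝ) (hκ : 0 < κ) (hc₁ : 0 < c₁) (hC₀ : 0 < C₀) :
    ∃ C : ℝ, 0 < C ∧ ∀ ε : ℝ, 0 < ε → ε < 1 / 2 → ∀ P : ℝ, |P| ≤ c₁ * ε →
      (s < β →
        (∫ p in {p : ℝ | κ * ε ≤ |p| ∧ |p| ≤ C₀},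
            |p| ^ (s - (k : ℝ)) * |P - p| ^ (ν - 1)) ≤ C * ε ^ (s - β)) ∧
      (β = s →
        (∫ p in {p : ℝ | κ * ε ≤ |p| ∧ |p| ≤ C₀},
            |p| ^ (s - (k : ℝ)) * |P - p| ^ (ν - 1)) ≤ C * Real.log (1 / ε)) ∧
      (β < s →
        (∫ p in {p : ℝ | κ * ε ≤ |p| ∧ |p| ≤ C₀},
            |p| ^ (s - (k : ℝ)) * |P - p| ^ (ν - 1)) ≤ C) := by
  subst hβ
  set N : ℝ := max κ (2 * c₁) with hNdef
  have hN : 0 < N := lt_of_lt_of_le hκ (le_max_left _ _)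
  set Ca : ℝ := κ ^ (s - (k : ℝ)) * (2 * ((3 * c₁) ^ ν / ν)) with hCadef
  set cb : ℝ := 2 ^ (1 - ν) * 2 with hcbdef
  have hCa : 0 < Ca := by
    rw [hCadef]; positivity
  have hcb : 0 < cb := by
    rw [hcbdef]; positivity
  have hσeq : s - ((k : ℝ) - ν) = s - (k : ℝ) + ν := by ring
  rcases lt_trichotomy s ((k : ℝ) - ν) with hc | hc | hc
  · -- s < β : bound by C ε^{s-β}
    refine ⟨Ca + cb * (N ^ (s - (k : ℝ) + ν) / ((k : ℝ) - ν - s)),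
      add_pos hCa (mul_pos hcb (div_pos (Real.rpow_pos_of_pos hN _) (by linarith))), ?_⟩
    intro ε hε hε2 P hP
    refine ⟨fun _ => ?_, fun h => absurd h hc.ne', fun h => absurd h (asymm hc)⟩
    have hK : (∫ t in Set.Ioc (N * ε) C₀, t ^ (s - (k : ℝ) + ν - 1))
        ≤ (N * ε) ^ (s - (k : ℝ) + ν) / ((k : ℝ) - ν - s) := by
      by_cases hbc : N * ε ≤ C₀
      · rw [← intervalIntegral.integral_of_le hbc,
          integral_rpow (Or.inr ⟨by intro h; rw [sub_eq_iff_eq_add] at h; linarith,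
            Set.notMem_uIcc_of_lt (by positivity) hC₀⟩)]
        rw [show s - (k : ℝ) + ν - 1 + 1 = s - (k : ℝ) + ν by ring]
        rw [show (C₀ ^ (s - (k : ℝ) + ν) - (N * ε) ^ (s - (k : ℝ) + ν)) / (s - (k : ℝ) + ν)
          = ((N * ε) ^ (s - (k : ℝ) + ν) - C₀ ^ (s - (k : ℝ) + ν)) / ((k : ℝ) - ν - s) by
            rw [div_eq_div_iff (by linarith) (by linarith)]; ring]
        exact (div_le_div_iff_of_pos_right (by linarith)).mpr
          (sub_le_self _ (Real.rpow_nonneg hC₀.le _))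
      · push_neg at hbc
        rw [Set.Ioc_eq_empty (by linarith), MeasureTheory.Measure.restrict_empty,
          MeasureTheory.integral_zero_measure]
        exact le_of_lt (div_pos (Real.rpow_pos_of_pos (by positivity) _) (by linarith))
    calc ∫ p in {p : ℝ | κ * ε ≤ |p| ∧ |p| ≤ C₀}, |p| ^ (s - (k : ℝ)) * |P - p| ^ (ν - 1)
        ≤ Ca * ε ^ (s - (k : ℝ) + ν)
            + cb * ∫ t in Set.Ioc (N * ε) C₀, t ^ (s - (k : ℝ) + ν - 1) :=
          stmt15_core ν hν1 hν2 k s hs2 κ c₁ C₀ hκ hc₁ hC₀ ε hε P hP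
      _ ≤ Ca * ε ^ (s - (k : ℝ) + ν)
            + cb * ((N * ε) ^ (s - (k : ℝ) + ν) / ((k : ℝ) - ν - s)) :=
          add_le_add_right (mul_le_mul_of_nonneg_left hK hcb.le) _
      _ = (Ca + cb * (N ^ (s - (k : ℝ) + ν) / ((k : ℝ) - ν - s))) * ε ^ (s - ((k : ℝ) - ν)) := by
          rw [Real.mul_rpow hN.le hε.le, hσeq]; ring
  · -- s = β : bound by C log(1/ε)
    have hLabs : (0:ℝ) ≤ |Real.log C₀| + |Real.log N| := by positivity
    have hlog2 : 0 < Real.log 2 := Real.log_pos one_lt_two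
    set D : ℝ := Ca + cb * (|Real.log C₀| + |Real.log N|) with hDdef
    have hD : 0 < D := by rw [hDdef]; nlinarith
    refine ⟨D / Real.log 2 + cb, by positivity, ?_⟩
    intro ε hε hε2 P hP
    have hLpos : 0 < Real.log (1 / ε) := Real.log_pos (by rw [lt_div_iff₀ hε, one_mul]; linarith)
    have hL2 : Real.log 2 ≤ Real.log (1 / ε) := by
      rw [Real.log_le_log_iff (by norm_num) (by positivity), le_div_iff₀ hε]; linarith
    refine ⟨fun h => absurd h (by linarith), fun _ => ?_, fun h => absurd h (by linarith)⟩
    have hK : (∫ t in Set.Ioc (N * ε) C₀, t ^ (s - (k : ℝ) + ν - 1))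
        ≤ |Real.log C₀| + |Real.log N| + Real.log (1 / ε) := by
      by_cases hbc : N * ε ≤ C₀
      · rw [← intervalIntegral.integral_of_le hbc]
        rw [intervalIntegral.integral_congr (g := fun t : ℝ => t⁻¹) (fun x hx => by
          rw [show s - (k : ℝ) + ν - 1 = -1 by linarith, Real.rpow_neg_one])]
        rw [integral_inv (Set.notMem_uIcc_of_lt (by positivity) hC₀)]
        rw [Real.log_div hC₀.ne' (by positivity), Real.log_mul hN.ne' hε.ne']
        have h1 : Real.log (1 / ε) = -Real.log ε := by rw [one_div, Real.log_inv]
        linarith [le_abs_self (Real.log C₀), neg_abs_le (Real.log N)]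
      · push_neg at hbc
        rw [Set.Ioc_eq_empty (by linarith), MeasureTheory.Measure.restrict_empty,
          MeasureTheory.integral_zero_measure]
        linarith
    have hε0 : ε ^ (s - (k : ℝ) + ν) = 1 := by
      rw [show s - (k : ℝ) + ν = 0 by linarith, Real.rpow_zero]
    calc ∫ p in {p : ℝ | κ * ε ≤ |p| ∧ |p| ≤ C₀}, |p| ^ (s - (k : ℝ)) * |P - p| ^ (ν - 1)
        ≤ Ca * ε ^ (s - (k : ℝ) + ν)
            + cb * ∫ t in Set.Ioc (N * ε) C₀, t ^ (s - (k : ℝ) + ν - 1) :=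
          stmt15_core ν hν1 hν2 k s hs2 κ c₁ C₀ hκ hc₁ hC₀ ε hε P hP
      _ ≤ Ca + cb * (|Real.log C₀| + |Real.log N| + Real.log (1 / ε)) := by
          rw [hε0, mul_one]
          exact add_le_add_right (mul_le_mul_of_nonneg_left hK hcb.le) _
      _ = D + cb * Real.log (1 / ε) := by rw [hDdef]; ring
      _ ≤ (D / Real.log 2) * Real.log (1 / ε) + cb * Real.log (1 / ε) := by
          have h2 : D = (D / Real.log 2) * Real.log 2 := by
            field_simp
          nth_rewrite 1 [h2]
          exact add_le_add_left
            (mul_le_mul_of_nonneg_left hL2 (le_of_lt (div_pos hD hlog2))) _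
      _ = (D / Real.log 2 + cb) * Real.log (1 / ε) := by ring
  · -- β < s : bounded
    have hσ : 0 < s - (k : ℝ) + ν := by linarith
    refine ⟨Ca + cb * (C₀ ^ (s - (k : ℝ) + ν) / (s - (k : ℝ) + ν)),
      add_pos hCa (mul_pos hcb (div_pos (Real.rpow_pos_of_pos hC₀ _) hσ)), ?_⟩
    intro ε hε hε2 P hP
    refine ⟨fun h => absurd h (asymm hc), fun h => absurd h hc.ne, fun _ => ?_⟩
    have hK : (∫ t in Set.Ioc (N * ε) C₀, t ^ (s - (k : ℝ) + ν - 1))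
        ≤ C₀ ^ (s - (k : ℝ) + ν) / (s - (k : ℝ) + ν) := by
      by_cases hbc : N * ε ≤ C₀
      · rw [← intervalIntegral.integral_of_le hbc,
          integral_rpow (Or.inl (by linarith))]
        rw [show s - (k : ℝ) + ν - 1 + 1 = s - (k : ℝ) + ν by ring]
        exact (div_le_div_iff_of_pos_right hσ).mpr (sub_le_self _ (Real.rpow_nonneg (by positivity) _))
      · push_neg at hbc
        rw [Set.Ioc_eq_empty (by linarith), MeasureTheory.Measure.restrict_empty,
          MeasureTheory.integral_zero_measure]
        positivity
    have hε1 : ε ^ (s - (k : ℝ) + ν) ≤ 1 :=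
      Real.rpow_le_one hε.le (by linarith) hσ.le
    calc ∫ p in {p : ℝ | κ * ε ≤ |p| ∧ |p| ≤ C₀}, |p| ^ (s - (k : ℝ)) * |P - p| ^ (ν - 1)
        ≤ Ca * ε ^ (s - (k : ℝ) + ν)
            + cb * ∫ t in Set.Ioc (N * ε) C₀, t ^ (s - (k : ℝ) + ν - 1) :=
          stmt15_core ν hν1 hν2 k s hs2 κ c₁ C₀ hκ hc₁ hC₀ ε hε P hP
      _ ≤ Ca * 1 + cb * (C₀ ^ (s - (k : ℝ) + ν) / (s - (k : ℝ) + ν)) :=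
          add_le_add (mul_le_mul_of_nonneg_left hε1 hCa.le)
            (mul_le_mul_of_nonneg_left hK hcb.le)
      _ = Ca + cb * (C₀ ^ (s - (k : ℝ) + ν) / (s - (k : ℝ) + ν)) := by ring
end
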